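/- arXiv:1305.0575 — 3 statements merged into one kernel-verified Lean document; each statement's English description precedes it below -/
import Mathlib

section
/- Let c ∈ [1,2), h ∈ 𝓕_c (with the additional c = 1 assumptions when c = 1), and let φ : [h(x₀),∞) → [x₀,∞) be the inverse of h. Then there exists p₀ ∈ ℕ such that for every integer p ≥ p₀ one has: p ∈ 𝐍_h if and only if ⌊−φ(p)⌋ − ⌊−φ(p+1)⌋ = 1. -/
open Filter MeasureTheory Set
open scoped Topology ENNReal NNReal

noncomputable section

/-- Membership in the family `𝓕_c` of the paper: `h : [x₀,∞) → [1,∞)` is `C³`, with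
`h' > 0`, `h'' > 0`, and `h x = C_h * x^c * exp (∫_{x₀}^x ϑ t / t dt)` where `ϑ → 0`,
`x ϑ' → 0`, `x² ϑ'' → 0`, `x³ ϑ''' → 0` at infinity. -/
def MemFc (c x₀ : ℝ) (h ϑ : ℝ → ℝ) : Prop :=
  1 ≤ x₀ ∧
  (∀ x, x₀ ≤ x → 1 ≤ h x) ∧
  ContDiffOn ℝ 3 h (Set.Ici x₀) ∧
  (∀ x, x₀ ≤ x → 0 < deriv h x) ∧
  (∀ x, x₀ ≤ x → 0 < deriv (deriv h) x) ∧
  ContDiffOn ℝ 3 ϑ (Set.Ici x₀) ∧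
  (∃ Ch : ℝ, 0 < Ch ∧ ∀ x, x₀ ≤ x →
    h x = Ch * x ^ c * Real.exp (∫ t in x₀..x, ϑ t / t)) ∧
  Tendsto ϑ atTop (nhds 0) ∧
  Tendsto (fun x => x * deriv ϑ x) atTop (nhds 0) ∧
  Tendsto (fun x => x ^ (2 : ℕ) * deriv (deriv ϑ) x) atTop (nhds 0) ∧
  Tendsto (fun x => x ^ (3 : ℕ) * deriv (deriv (deriv ϑ)) x) atTop (nhds 0)

/-- The additional assumptions imposed when `c = 1`: `ϑ` is positive and decreasing,
`ϑ(x)⁻¹ ≲_ε x^ε`, `x / h x → 0`, and `x ϑ'/ϑ → 0`, `x² ϑ''/ϑ → 0`, `x³ ϑ'''/ϑ → 0`. -/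
def MemFcOne (x₀ : ℝ) (h ϑ : ℝ → ℝ) : Prop :=
  (∀ x, x₀ ≤ x → 0 < ϑ x) ∧
  (∀ x y, x₀ ≤ x → x ≤ y → ϑ y ≤ ϑ x) ∧
  (∀ ε : ℝ, 0 < ε → ∃ C : ℝ, 0 < C ∧ ∀ x, x₀ ≤ x → (ϑ x)⁻¹ ≤ C * x ^ ε) ∧
  Tendsto (fun x => x / h x) atTop (nhds 0) ∧
  Tendsto (fun x => x * deriv ϑ x / ϑ x) atTop (nhds 0) ∧
  Tendsto (fun x => x ^ (2 : ℕ) * deriv (deriv ϑ) x / ϑ x) atTop (nhds 0) ∧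
  Tendsto (fun x => x ^ (3 : ℕ) * deriv (deriv (deriv ϑ)) x / ϑ x) atTop (nhds 0)

/-- `𝐍_h = {n ∈ ℕ : ∃ m ∈ ℕ, n = ⌊h m⌋}` (with `ℕ` the positive integers). -/
def Nh (h : ℝ → ℝ) : Set ℕ :=
  {n : ℕ | 0 < n ∧ ∃ m : ℕ, 0 < m ∧ (n : ℤ) = ⌊h (m : ℝ)⌋}

/-- `η` is a smooth cut-off supported in `(1/2, 4)`, equal to `1` on `[1,2]`, with values
in `[0,1]`. -/
def IsCutoff (η : ℝ → ℝ) : Prop :=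
  ContDiff ℝ (⊤ : ℕ∞) η ∧
  (∀ x, x ∉ Set.Ioo (1/2 : ℝ) 4 → η x = 0) ∧
  (∀ x ∈ Set.Icc (1 : ℝ) 2, η x = 1) ∧
  (∀ x, 0 ≤ η x ∧ η x ≤ 1)

/-- `φ` is the inverse of `h : [x₀,∞) → [h x₀, ∞)`. -/
def IsInverseOn (h φ : ℝ → ℝ) (x₀ : ℝ) : Prop :=
  (∀ x, x₀ ≤ x → φ (h x) = x) ∧ (∀ y, h x₀ ≤ y → x₀ ≤ φ y ∧ h (φ y) = y)

/-- Convolution of two functions on `ℤ`. -/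
def conv (K f : ℤ → ℝ) (x : ℤ) : ℝ := ∑' y : ℤ, K y * f (x - y)

/-- The kernel `K_{h,N}(x) = |𝐍_h ∩ [1,N]|⁻¹ ∑_{n ∈ 𝐍_h ∩ [1,N]} δ_n(x) η(n/N)`. -/
def Kh (h η : ℝ → ℝ) (N : ℕ) (x : ℤ) : ℝ :=
  ((Nh h ∩ Set.Icc 1 N).ncard : ℝ)⁻¹ *
    ∑ n ∈ Finset.Icc 1 N,
      Set.indicator (Nh h) (fun n : ℕ => if (n : ℤ) = x then η ((n : ℝ) / N) else 0) n

/-- The maximal function `𝓜_h f(x) = sup_{N ≥ 1} |K_{h,N} * f(x)|`, valued in `ℝ≥0∞`. -/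
def maxFn (h η : ℝ → ℝ) (f : ℤ → ℝ) (x : ℤ) : ℝ≥0∞ :=
  ⨆ N ∈ Set.Ici (1 : ℕ), ENNReal.ofReal |conv (Kh h η N) f x|

/-- Lemma 2.3 of the paper. For `h ∈ 𝓕_c` with inverse `φ`, for all
sufficiently large integers `p`, one has `p ∈ 𝐍_h` if and only if
`⌊-φ(p)⌋ - ⌊-φ(p+1)⌋ = 1`. -/
theorem mem_Nh_iff_floor_difference
    (c x₀ : ℝ) (h ϑ φ : ℝ → ℝ)
    (hc1 : 1 ≤ c) (hc2 : c < 2)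
    (hF : MemFc c x₀ h ϑ) (hone : c = 1 → MemFcOne x₀ h ϑ)
    (hφ : IsInverseOn h φ x₀) :
    ∃ p₀ : ℕ, ∀ p : ℕ, p₀ ≤ p →
      (p ∈ Nh h ↔ ⌊-(φ (p : ℝ))⌋ - ⌊-(φ ((p : ℝ) + 1))⌋ = 1) := by
  obtain ⟨hx₀, hh1, hhC3, hh', hh'', hϑC3, ⟨Ch, hCh, hrep⟩, hϑ0, -, -, -⟩ := hF
  have hx₀0 : (0:ℝ) < x₀ := lt_of_lt_of_le one_pos hx₀
  have hconth : ContinuousOn h (Ici x₀) := hhC3.continuousOn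
  have hmono : StrictMonoOn h (Ici x₀) := by
    apply strictMonoOn_of_deriv_pos (convex_Ici x₀) hconth
    intro x hx
    rw [interior_Ici] at hx
    exact hh' x hx.le
  have hmono' : MonotoneOn h (Ici x₀) := hmono.monotoneOn
  have hconv : ConvexOn ℝ (Ici x₀) h := by
    apply convexOn_of_deriv2_nonneg (convex_Ici x₀) hconth
    · rw [interior_Ici]
      exact (hhC3.mono Ioi_subset_Ici_self).differentiableOn (by norm_num)
    · rw [interior_Ici]
      have hd2 : ContDiffOn ℝ 2 (deriv h) (Ioi x₀) :=
        (hhC3.mono Ioi_subset_Ici_self).deriv_of_isOpen isOpen_Ioi (by norm_num)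
      exact hd2.differentiableOn (by norm_num)
    · intro x hx
      rw [interior_Ici] at hx
      have : deriv^[2] h x = deriv (deriv h) x := by
        simp [Function.iterate_succ, Function.iterate_zero]
      rw [this]
      exact (hh'' x hx.le).le
  -- h x / x → ∞
  have hdiv : Tendsto (fun x => h x / x) atTop atTop := by
    rcases eq_or_lt_of_le hc1 with hc | hc
    · obtain ⟨-, -, -, hxh, -, -, -⟩ := hone hc.symm
      have h0 : Tendsto (fun x => x / h x) atTop (𝓝[>] 0) := by
        rw [tendsto_nhdsWithin_iff]
        refine ⟨hxh, ?_⟩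
        filter_upwards [eventually_ge_atTop (max x₀ 1)] with x hx
        have hx1 : (1:ℝ) ≤ x := le_trans (le_max_right _ _) hx
        have := hh1 x (le_trans (le_max_left _ _) hx)
        exact Set.mem_Ioi.mpr (div_pos (by linarith) (by linarith))
      have h1 := h0.inv_tendsto_nhdsGT_zero
      refine h1.congr (fun x => ?_)
      simp [inv_div]
    · set ε := (c - 1)/2 with hεdef
      have hε : 0 < ε := by rw [hεdef]; linarith
      obtain ⟨a, ha⟩ := ((hϑ0.eventually (Ioo_mem_nhds (show -ε < (0:ℝ) by linarith) hε)).and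
        (eventually_ge_atTop x₀)).exists_forall_of_atTop
      set x₁ := max a x₀ with hx₁def
      have hx₁x₀ : x₀ ≤ x₁ := le_max_right _ _
      have hx₁0 : 0 < x₁ := lt_of_lt_of_le hx₀0 hx₁x₀
      have hϑsmall : ∀ t, x₁ ≤ t → -ε < ϑ t := by
        intro t ht
        exact ((ha t (le_trans (le_max_left _ _) ht)).1).1
      have hgcont : ContinuousOn (fun t => ϑ t / t) (Ici x₀) := by
        apply (hϑC3.continuousOn).div continuousOn_id
        intro t ht
        exact ne_of_gt (lt_of_lt_of_le hx₀0 ht)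
      have hint : ∀ u v, x₀ ≤ u → x₀ ≤ v →
          IntervalIntegrable (fun t => ϑ t / t) volume u v := by
        intro u v hu hv
        apply (hgcont.mono ?_).intervalIntegrable
        intro t ht
        exact le_trans (le_min hu hv) ht.1
      set A := ∫ t in x₀..x₁, ϑ t / t with hAdef
      have hIbound : ∀ x, x₁ ≤ x →
          A - ε * (Real.log x - Real.log x₁) ≤ ∫ t in x₀..x, ϑ t / t := by
        intro x hx
        have hxx₀ : x₀ ≤ x := le_trans hx₁x₀ hx
        have hx0 : 0 < x := lt_of_lt_of_le hx₁0 hx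
        have hsplit : ∫ t in x₀..x, ϑ t / t = A + ∫ t in x₁..x, ϑ t / t :=
          (intervalIntegral.integral_add_adjacent_intervals (hint _ _ le_rfl hx₁x₀)
            (hint _ _ hx₁x₀ hxx₀)).symm
        rw [hsplit]
        have hconst : ContinuousOn (fun t : ℝ => (-ε) / t) (Ici x₀) := by
          apply continuousOn_const.div continuousOn_id
          intro t ht
          exact ne_of_gt (lt_of_lt_of_le hx₀0 ht)
        have hintc : IntervalIntegrable (fun t : ℝ => (-ε) / t) volume x₁ x := by
          apply (hconst.mono ?_).intervalIntegrable
          intro t ht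
          exact le_trans (le_min hx₁x₀ hxx₀) ht.1
        have h2 : ∫ t in x₁..x, (-ε) / t ≤ ∫ t in x₁..x, ϑ t / t := by
          apply intervalIntegral.integral_mono_on hx hintc (hint _ _ hx₁x₀ hxx₀)
          intro t ht
          have ht0 : 0 < t := lt_of_lt_of_le hx₁0 ht.1
          have hϑt := hϑsmall t ht.1
          gcongr
        have h3 : ∫ t in x₁..x, (-ε) / t = -(ε * (Real.log x - Real.log x₁)) := by
          have heq : ∀ t : ℝ, (-ε) / t = (-ε) * (1/t) := fun t => by ring
          have hnm : (0:ℝ) ∉ Set.uIcc x₁ x := by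
            rw [Set.uIcc_of_le hx]
            rintro ⟨h0, -⟩
            linarith
          simp_rw [heq]
          rw [intervalIntegral.integral_const_mul, integral_one_div hnm,
            Real.log_div (lt_of_lt_of_le hx₁0 hx).ne' hx₁0.ne']
          ring
        linarith [h2, h3.symm.le]
      set C₀ := Ch * Real.exp A * x₁ ^ ε with hC₀def
      have hC₀ : 0 < C₀ := by
        rw [hC₀def]
        positivity
      have hlow : ∀ x, x₁ ≤ x → C₀ * x ^ ε ≤ h x / x := by
        intro x hx
        have hxx₀ : x₀ ≤ x := le_trans hx₁x₀ hx
        have hx0 : 0 < x := lt_of_lt_of_le hx₁0 hx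
        rw [le_div_iff₀ hx0, hrep x hxx₀]
        have e1 : Real.exp (A - ε * (Real.log x - Real.log x₁)) ≤
            Real.exp (∫ t in x₀..x, ϑ t / t) := Real.exp_le_exp.mpr (hIbound x hx)
        have e2 : Real.exp (A - ε * (Real.log x - Real.log x₁)) =
            Real.exp A * x₁ ^ ε * x ^ (-ε) := by
          rw [Real.rpow_def_of_pos hx₁0, Real.rpow_def_of_pos hx0, ← Real.exp_add,
            ← Real.exp_add]
          ring_nf
        have e3 : Ch * x ^ c * (Real.exp A * x₁ ^ ε * x ^ (-ε)) = C₀ * x ^ ε * x := by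
          rw [hC₀def]
          have : x ^ c * x ^ (-ε) = x ^ ε * x := by
            rw [← Real.rpow_add hx0, ← Real.rpow_add_one hx0.ne']
            congr 1
            rw [hεdef]; ring
          calc Ch * x ^ c * (Real.exp A * x₁ ^ ε * x ^ (-ε))
              = Ch * Real.exp A * x₁ ^ ε * (x ^ c * x ^ (-ε)) := by ring
            _ = Ch * Real.exp A * x₁ ^ ε * (x ^ ε * x) := by rw [this]
            _ = Ch * Real.exp A * x₁ ^ ε * x ^ ε * x := by ring
        calc C₀ * x ^ ε * x = Ch * x ^ c * (Real.exp A * x₁ ^ ε * x ^ (-ε)) := e3.symm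
          _ ≤ Ch * x ^ c * Real.exp (∫ t in x₀..x, ϑ t / t) := by
              apply mul_le_mul_of_nonneg_left (e2 ▸ e1)
              positivity
      have htend : Tendsto (fun x : ℝ => C₀ * x ^ ε) atTop atTop :=
        (tendsto_rpow_atTop hε).const_mul_atTop hC₀
      apply tendsto_atTop_mono' atTop ?_ htend
      filter_upwards [eventually_ge_atTop x₁] with x hx
      exact hlow x hx
  -- pick X₁
  obtain ⟨X₀, hX₀⟩ := ((hdiv.eventually_ge_atTop 3).and
    (eventually_ge_atTop (max (x₀ + 1) (h x₀)))).exists_forall_of_atTop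
  set X₁ := max X₀ (max (x₀ + 1) (h x₀)) with hX₁def
  have hX₁big : ∀ x, X₁ ≤ x → 3 ≤ h x / x ∧ x₀ + 1 ≤ x ∧ h x₀ ≤ x := by
    intro x hx
    have h1 := hX₀ x (le_trans (le_max_left _ _) hx)
    have h2 : max (x₀ + 1) (h x₀) ≤ x := le_trans (le_max_right _ _) hx
    exact ⟨h1.1, le_trans (le_max_left _ _) h2, le_trans (le_max_right _ _) h2⟩
  have hX₁x₀ : x₀ + 1 ≤ X₁ := le_trans (le_max_left _ _) (le_max_right _ _)
  have hX₁x₀' : x₀ ≤ X₁ := by linarith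
  -- gap lemma
  have hgap : ∀ x, X₁ ≤ x → h x + 2 ≤ h (x + 1) := by
    intro x hx
    obtain ⟨hr1, hr2, hr3⟩ := hX₁big x hx
    have hx0 : 0 < x := by linarith
    have hxx₀ : x₀ < x := by linarith
    have h3x : 3 * x ≤ h x := by
      rw [← le_div_iff₀ hx0]
      linarith [hr1]
    have hslope := hconv.slope_mono_adjacent (self_mem_Ici)
      (show x + 1 ∈ Ici x₀ by simp; linarith) hxx₀ (lt_add_one x)
    rw [show x + 1 - x = (1:ℝ) by ring, div_one] at hslope
    have h2 : 2 ≤ (h x - h x₀) / (x - x₀) := by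
      rw [le_div_iff₀ (by linarith)]
      linarith
    linarith
  -- φ facts
  obtain ⟨hφ1, hφ2⟩ := hφ
  have hφmono : ∀ y z, h x₀ ≤ y → y ≤ z → φ y ≤ φ z := by
    intro y z hy hyz
    by_contra hlt
    push_neg at hlt
    have h1 := hφ2 y hy
    have h2 := hφ2 z (le_trans hy hyz)
    have := hmono h2.1 h1.1 hlt
    rw [h1.2, h2.2] at this
    linarith
  have hφstrict : ∀ y z, h x₀ ≤ y → y < z → φ y < φ z := by
    intro y z hy hyz
    have h1 := hφ2 y hy
    have h2 := hφ2 z (le_trans hy hyz.le)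
    by_contra hle
    push_neg at hle
    have := hmono' h2.1 h1.1 hle
    rw [h1.2, h2.2] at this
    linarith
  -- p₀
  set M₀ := ⌈x₀⌉₊ with hM₀def
  set B := (Finset.Icc 1 M₀).sup (fun m => (⌊h (m:ℝ)⌋ + 1).toNat) with hBdef
  refine ⟨max (⌈h X₁⌉₊ + 1) (B + 1), fun p hp => ?_⟩
  have hp1 : 1 ≤ p := le_trans (le_trans (Nat.le_add_left 1 B) (le_max_right _ _)) hp
  have hpX : h X₁ ≤ (p:ℝ) := by
    have h1 : ⌈h X₁⌉₊ ≤ p := le_trans (Nat.le_succ _) (le_trans (le_max_left _ _) hp)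
    calc h X₁ ≤ (⌈h X₁⌉₊ : ℝ) := Nat.le_ceil _
      _ ≤ (p:ℝ) := by exact_mod_cast h1
  have hhx₀X₁ : h x₀ ≤ h X₁ := hmono' self_mem_Ici hX₁x₀' hX₁x₀'
  have hhx₀p : h x₀ ≤ (p:ℝ) := le_trans hhx₀X₁ hpX
  have hhx₀p1 : h x₀ ≤ (p:ℝ) + 1 := by linarith
  obtain ⟨hφpx₀, hφpval⟩ := hφ2 (p:ℝ) hhx₀p
  obtain ⟨hφp1x₀, hφp1val⟩ := hφ2 ((p:ℝ) + 1) hhx₀p1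
  have hφpX₁ : X₁ ≤ φ (p:ℝ) := by
    have := hφmono (h X₁) (p:ℝ) hhx₀X₁ hpX
    rwa [hφ1 X₁ hX₁x₀'] at this
  have hgapφ : φ ((p:ℝ) + 1) < φ (p:ℝ) + 1 := by
    have hg := hgap (φ (p:ℝ)) hφpX₁
    rw [hφpval] at hg
    by_contra hle
    push_neg at hle
    have := hmono' (show φ (p:ℝ) + 1 ∈ Ici x₀ by simp; linarith) hφp1x₀ hle
    rw [hφp1val] at this
    linarith
  -- rewrite goal
  rw [show (⌊-(φ (p:ℝ))⌋ - ⌊-(φ ((p:ℝ) + 1))⌋ = 1) ↔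
      (⌈φ ((p:ℝ) + 1)⌉ - ⌈φ (p:ℝ)⌉ = 1) by
    rw [Int.floor_neg, Int.floor_neg]; omega]
  constructor
  · rintro ⟨hp0, m, hm0, hm⟩
    have hmM : M₀ < m := by
      by_contra hle
      push_neg at hle
      have hmem : m ∈ Finset.Icc 1 M₀ := Finset.mem_Icc.mpr ⟨hm0, hle⟩
      have hs := Finset.le_sup (f := fun m : ℕ => (⌊h (m:ℝ)⌋ + 1).toNat) hmem
      have h2 : (⌊h ((m:ℕ):ℝ)⌋ + 1) ≤ (B:ℤ) :=
        le_trans (Int.self_le_toNat _) (by exact_mod_cast hs)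
      have hpB : B + 1 ≤ p := le_trans (le_max_right _ _) hp
      have hpB' : (B:ℤ) + 1 ≤ (p:ℤ) := by exact_mod_cast hpB
      rw [← hm] at h2
      omega
    have hmx₀ : x₀ ≤ (m:ℝ) := by
      have h1 : x₀ ≤ (M₀:ℝ) := Nat.le_ceil x₀
      have h2 : (M₀:ℝ) + 1 ≤ (m:ℝ) := by exact_mod_cast hmM
      linarith
    have hfl := Int.floor_eq_iff.mp hm.symm
    have hfl1 : (p:ℝ) ≤ h (m:ℝ) := by exact_mod_cast hfl.1
    have hfl2 : h (m:ℝ) < (p:ℝ) + 1 := by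
      have := hfl.2
      push_cast at this
      linarith
    have hφp_le_m : φ (p:ℝ) ≤ (m:ℝ) := by
      have := hφmono (p:ℝ) (h (m:ℝ)) hhx₀p hfl1
      rwa [hφ1 (m:ℝ) hmx₀] at this
    have hm_lt : (m:ℝ) < φ ((p:ℝ) + 1) := by
      have := hφstrict (h (m:ℝ)) ((p:ℝ) + 1) (le_trans hhx₀p hfl1) hfl2
      rwa [hφ1 (m:ℝ) hmx₀] at this
    have c1 : ⌈φ (p:ℝ)⌉ ≤ (m:ℤ) := Int.ceil_le.mpr (by exact_mod_cast hφp_le_m)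
    have c2 : (m:ℤ) < ⌈φ ((p:ℝ) + 1)⌉ := Int.lt_ceil.mpr (by exact_mod_cast hm_lt)
    have c3 : ⌈φ ((p:ℝ) + 1)⌉ ≤ ⌈φ (p:ℝ)⌉ + 1 := by
      calc ⌈φ ((p:ℝ) + 1)⌉ ≤ ⌈φ (p:ℝ) + 1⌉ := Int.ceil_le_ceil hgapφ.le
        _ = ⌈φ (p:ℝ)⌉ + 1 := by exact_mod_cast Int.ceil_add_intCast (φ (p:ℝ)) 1
    omega
  · intro hceil
    have hk := Int.le_ceil (φ (p:ℝ))
    have hk2 : (⌈φ (p:ℝ)⌉ : ℝ) < φ ((p:ℝ) + 1) := by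
      have h1 : (⌈φ ((p:ℝ) + 1)⌉ : ℝ) < φ ((p:ℝ) + 1) + 1 := Int.ceil_lt_add_one _
      have h2 : ⌈φ (p:ℝ)⌉ = ⌈φ ((p:ℝ) + 1)⌉ - 1 := by omega
      rw [h2]
      push_cast
      linarith
    have hk0 : 0 < ⌈φ (p:ℝ)⌉ := by
      rw [Int.ceil_pos]
      have : (1:ℝ) ≤ X₁ := by linarith
      linarith
    refine ⟨hp1, ⌈φ (p:ℝ)⌉.toNat, by omega, ?_⟩
    have hmcast : ((⌈φ (p:ℝ)⌉.toNat : ℕ) : ℝ) = (⌈φ (p:ℝ)⌉ : ℝ) := by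
      exact_mod_cast Int.toNat_of_nonneg hk0.le
    rw [hmcast]
    have hmx₀ : x₀ ≤ (⌈φ (p:ℝ)⌉ : ℝ) := le_trans hφpx₀ hk
    have hlow : (p:ℝ) ≤ h (⌈φ (p:ℝ)⌉ : ℝ) := by
      have := hmono' hφpx₀ hmx₀ hk
      rwa [hφpval] at this
    have hupp : h (⌈φ (p:ℝ)⌉ : ℝ) < (p:ℝ) + 1 := by
      have := hmono hmx₀ hφp1x₀ hk2
      rwa [hφp1val] at this
    symm
    rw [Int.floor_eq_iff]
    constructor
    · exact_mod_cast hlow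
    · push_cast
      linarith

end
end

section
/- Let c ∈ [1, 4/3), h ∈ 𝓕_c (with the additional c = 1 assumptions when c = 1), and let φ be the inverse of h. Then there exist χ' > 0 and C > 0 such that for all sufficiently large N ∈ ℕ: | #(𝐍_h ∩ [1,N]) − φ(N) | ≤ C φ(N) N^{−χ'}. In particular #(𝐍_h ∩ [1,N]) / φ(N) → 1 as N → ∞. -/
open Filter MeasureTheory Set
open scoped Topology ENNReal NNReal

noncomputable section

/- ### Auxiliary lemmas -/

lemma diffAt_of_deriv_pos {f : ℝ → ℝ} {x : ℝ} (h : 0 < deriv f x) : DifferentiableAt ℝ f x := by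
  by_contra hd
  rw [deriv_zero_of_not_differentiableAt hd] at h
  exact lt_irrefl 0 h

lemma strictMonoOn_of_deriv_pos' {x₀ : ℝ} {f : ℝ → ℝ} (hd : ∀ x, x₀ ≤ x → 0 < deriv f x) :
    StrictMonoOn f (Ici x₀) :=
  strictMonoOn_of_deriv_pos (convex_Ici x₀)
    (fun x hx => (diffAt_of_deriv_pos (hd x hx)).continuousAt.continuousWithinAt)
    (fun x hx => hd x (le_of_lt (by rwa [interior_Ici] at hx)))

lemma monotoneOn_deriv {x₀ : ℝ} {f : ℝ → ℝ} (hd2 : ∀ x, x₀ ≤ x → 0 < deriv (deriv f) x) :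
    MonotoneOn (deriv f) (Ici x₀) :=
  monotoneOn_of_deriv_nonneg (convex_Ici x₀)
    (fun x hx => (diffAt_of_deriv_pos (hd2 x hx)).continuousAt.continuousWithinAt)
    (fun x hx =>
      (diffAt_of_deriv_pos (hd2 x (le_of_lt (by rwa [interior_Ici] at hx)))).differentiableWithinAt)
    (fun x hx => (hd2 x (le_of_lt (by rwa [interior_Ici] at hx))).le)

lemma mvt_slope {x₀ : ℝ} {f : ℝ → ℝ} (hd : ∀ x, x₀ ≤ x → 0 < deriv f x)
    {a b : ℝ} (ha : x₀ ≤ a) (hab : a < b) :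
    ∃ ξ ∈ Ioo a b, deriv f ξ = (f b - f a) / (b - a) :=
  exists_deriv_eq_slope f hab
    (fun x hx => (diffAt_of_deriv_pos (hd x (ha.trans hx.1))).continuousAt.continuousWithinAt)
    (fun x hx => (diffAt_of_deriv_pos (hd x (ha.trans hx.1.le))).differentiableWithinAt)

lemma hasDerivAt_W {x₀ : ℝ} {ϑ : ℝ → ℝ} (hϑ : ContinuousOn ϑ (Ici x₀)) (hx₀ : 0 < x₀)
    (Ch r : ℝ) {x : ℝ} (hx : x₀ < x) :
    HasDerivAt (fun y => Ch * y ^ r * Real.exp (∫ t in x₀..y, ϑ t / t))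
      (Ch * x ^ r * Real.exp (∫ t in x₀..x, ϑ t / t) * ((r + ϑ x) / x)) x := by
  have hxpos : 0 < x := hx₀.trans hx
  have hcont : ContinuousOn (fun t => ϑ t / t) (Ici x₀) :=
    hϑ.div continuousOn_id (fun t ht => (hx₀.trans_le ht).ne')
  have hcont' : ContinuousOn (fun t => ϑ t / t) (Ioi x₀) :=
    hcont.mono Ioi_subset_Ici_self
  have hg : HasDerivAt (fun y => ∫ t in x₀..y, ϑ t / t) (ϑ x / x) x := by
    refine intervalIntegral.integral_hasDerivAt_right
      ((hcont.mono ?_).intervalIntegrable)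
      (hcont'.stronglyMeasurableAtFilter isOpen_Ioi x hx)
      (hcont'.continuousAt (isOpen_Ioi.mem_nhds hx))
    rw [uIcc_of_le hx.le]
    exact Icc_subset_Ici_self
  have hu : HasDerivAt (fun y : ℝ => Ch * y ^ r) (Ch * (r * x ^ (r - 1))) x :=
    (Real.hasDerivAt_rpow_const (Or.inl hxpos.ne')).const_mul Ch
  have hv : HasDerivAt (fun y => Real.exp (∫ t in x₀..y, ϑ t / t))
      (Real.exp (∫ t in x₀..x, ϑ t / t) * (ϑ x / x)) x := hg.exp
  have := hu.mul hv
  refine this.congr_deriv ?_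
  rw [Real.rpow_sub hxpos r 1, Real.rpow_one]
  field_simp

lemma monotoneOn_W {x₀ : ℝ} {ϑ : ℝ → ℝ} (hϑ : ContinuousOn ϑ (Ici x₀)) (hx₀ : 0 < x₀)
    {Ch : ℝ} (hCh : 0 < Ch) (r : ℝ) {x₁ : ℝ} (hx₁ : x₀ < x₁)
    (hr : ∀ x, x₁ ≤ x → 0 ≤ r + ϑ x) :
    MonotoneOn (fun y => Ch * y ^ r * Real.exp (∫ t in x₀..y, ϑ t / t)) (Ici x₁) := by
  refine monotoneOn_of_deriv_nonneg (convex_Ici x₁)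
    (fun x hx => (hasDerivAt_W hϑ hx₀ Ch r (hx₁.trans_le hx)).differentiableAt.continuousAt.continuousWithinAt)
    (fun x hx => by
      rw [interior_Ici] at hx
      exact (hasDerivAt_W hϑ hx₀ Ch r (hx₁.trans hx)).differentiableAt.differentiableWithinAt)
    (fun x hx => ?_)
  rw [interior_Ici] at hx
  rw [(hasDerivAt_W hϑ hx₀ Ch r (hx₁.trans hx)).deriv]
  have hxpos : 0 < x := hx₀.trans (hx₁.trans hx)
  have h1 : 0 < Ch * x ^ r * Real.exp (∫ t in x₀..x, ϑ t / t) := by positivity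
  exact mul_nonneg h1.le (div_nonneg (hr x hx.le) hxpos.le)

lemma antitoneOn_W {x₀ : ℝ} {ϑ : ℝ → ℝ} (hϑ : ContinuousOn ϑ (Ici x₀)) (hx₀ : 0 < x₀)
    {Ch : ℝ} (hCh : 0 < Ch) (r : ℝ) {x₁ : ℝ} (hx₁ : x₀ < x₁)
    (hr : ∀ x, x₁ ≤ x → r + ϑ x ≤ 0) :
    AntitoneOn (fun y => Ch * y ^ r * Real.exp (∫ t in x₀..y, ϑ t / t)) (Ici x₁) := by
  refine antitoneOn_of_deriv_nonpos (convex_Ici x₁)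
    (fun x hx => (hasDerivAt_W hϑ hx₀ Ch r (hx₁.trans_le hx)).differentiableAt.continuousAt.continuousWithinAt)
    (fun x hx => by
      rw [interior_Ici] at hx
      exact (hasDerivAt_W hϑ hx₀ Ch r (hx₁.trans hx)).differentiableAt.differentiableWithinAt)
    (fun x hx => ?_)
  rw [interior_Ici] at hx
  rw [(hasDerivAt_W hϑ hx₀ Ch r (hx₁.trans hx)).deriv]
  have hxpos : 0 < x := hx₀.trans (hx₁.trans hx)
  have h1 : 0 < Ch * x ^ r * Real.exp (∫ t in x₀..x, ϑ t / t) := by positivity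
  exact mul_nonpos_of_nonneg_of_nonpos h1.le (div_nonpos_of_nonpos_of_nonneg (hr x hx.le) hxpos.le)


/-- asymptotics of `|𝐍_h ∩ [1,N]|`, Section 3 of the paper. There
are `χ' > 0` and `C > 0` such that `| #(𝐍_h ∩ [1,N]) - φ(N) | ≤ C φ(N) N^{-χ'}` for
all sufficiently large `N`; in particular `#(𝐍_h ∩ [1,N]) / φ(N) → 1`. -/
theorem card_Nh_asymptotics
    (c x₀ : ℝ) (h ϑ φ : ℝ → ℝ)
    (hc1 : 1 ≤ c) (hc2 : c < 4 / 3)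
    (hF : MemFc c x₀ h ϑ) (hone : c = 1 → MemFcOne x₀ h ϑ)
    (hφ : IsInverseOn h φ x₀) :
    (∃ χ' C : ℝ, 0 < χ' ∧ 0 < C ∧ ∃ N₀ : ℕ, ∀ N : ℕ, N₀ ≤ N →
      |((Nh h ∩ Set.Icc 1 N).ncard : ℝ) - φ (N : ℝ)| ≤
        C * φ (N : ℝ) * (N : ℝ) ^ (-χ')) ∧
    Tendsto (fun N : ℕ => ((Nh h ∩ Set.Icc 1 N).ncard : ℝ) / φ (N : ℝ))
      atTop (nhds 1) := by
  obtain ⟨hx01, hh1, -, hd1, hd2, hϑC, ⟨Ch, hCh, hform⟩, hϑ0, -, -, -⟩ := hF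
  have hx0pos : (0:ℝ) < x₀ := lt_of_lt_of_le one_pos hx01
  have hmono : StrictMonoOn h (Ici x₀) := strictMonoOn_of_deriv_pos' hd1
  have hdmono : MonotoneOn (deriv h) (Ici x₀) := monotoneOn_deriv hd2
  have hϑcont : ContinuousOn ϑ (Ici x₀) := hϑC.continuousOn
  -- splitting the formula for h
  have hsplit : ∀ r x, x₀ ≤ x →
      h x = (Ch * x ^ r * Real.exp (∫ t in x₀..x, ϑ t / t)) * x ^ (c - r) := by
    intro r x hx
    have hxpos : 0 < x := hx0pos.trans_le hx
    have h3 : x ^ c = x ^ r * x ^ (c - r) := by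
      rw [← Real.rpow_add hxpos]
      congr 1
      ring
    rw [hform x hx, h3]
    ring
  -- Step A : upper bound h x ≤ A * x ^ 2
  obtain ⟨x₂', hx₂'⟩ := eventually_atTop.1
    (hϑ0.eventually_lt_const (show (0:ℝ) < 2 - c by linarith))
  set x₂ : ℝ := max x₂' (x₀ + 1) with hx₂def
  have hx₂gt : x₀ < x₂ := lt_of_lt_of_le (lt_add_one x₀) (le_max_right _ _)
  have hanti := antitoneOn_W hϑcont hx0pos hCh (c - 2) hx₂gt
    (fun x hx => by have := hx₂' x (le_trans (le_max_left _ _) hx); linarith)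
  set A : ℝ := Ch * x₂ ^ (c - 2) * Real.exp (∫ t in x₀..x₂, ϑ t / t) with hAdef
  have hx₂pos : 0 < x₂ := hx0pos.trans hx₂gt
  have hApos : 0 < A := by positivity
  have hupper : ∀ x, x₂ ≤ x → h x ≤ A * x ^ (2:ℝ) := by
    intro x hx
    have hx0 : x₀ ≤ x := hx₂gt.le.trans hx
    have hxpos : 0 < x := hx0pos.trans_le hx0
    rw [hsplit (c - 2) x hx0, show c - (c - 2) = (2:ℝ) by ring]
    exact mul_le_mul_of_nonneg_right
      (hanti (mem_Ici.2 le_rfl) (mem_Ici.2 hx) hx)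
      (Real.rpow_pos_of_pos hxpos 2).le
  -- Step B : h x / x → ∞
  have hP : Tendsto (fun x => h x / x) atTop atTop := by
    rcases eq_or_lt_of_le hc1 with hc | hc
    · obtain ⟨-, -, -, h4, -⟩ := hone hc.symm
      have hev : ∀ᶠ x in atTop, x / h x ∈ Ioi (0:ℝ) := by
        filter_upwards [eventually_ge_atTop x₀] with x hx
        exact div_pos (hx0pos.trans_le hx) (lt_of_lt_of_le one_pos (hh1 x hx))
      have h5 : Tendsto (fun x => x / h x) atTop (𝓝[>] 0) :=
        tendsto_nhdsWithin_iff.2 ⟨h4, hev⟩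
      refine Tendsto.congr' ?_ h5.inv_tendsto_nhdsGT_zero
      filter_upwards with x
      simp [inv_div]
    · obtain ⟨x₃', hx₃'⟩ := eventually_atTop.1
        (hϑ0.eventually_const_lt (show -((c-1)/2) < 0 by linarith))
      set x₃ : ℝ := max x₃' (x₀ + 1) with hx₃def
      have hx₃gt : x₀ < x₃ := lt_of_lt_of_le (lt_add_one x₀) (le_max_right _ _)
      have hx₃pos : 0 < x₃ := hx0pos.trans hx₃gt
      have hmonoW := monotoneOn_W hϑcont hx0pos hCh ((c-1)/2) hx₃gt
        (fun x hx => by have := hx₃' x (le_trans (le_max_left _ _) hx); linarith)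
      set B : ℝ := Ch * x₃ ^ ((c-1)/2) * Real.exp (∫ t in x₀..x₃, ϑ t / t) with hBdef
      have hB : 0 < B := by positivity
      apply tendsto_atTop_mono' atTop
        (f₁ := fun x => B * x ^ ((c-1)/2))
      · filter_upwards [eventually_ge_atTop x₃, eventually_gt_atTop (0:ℝ)] with x hx hx0
        have hxx₀ : x₀ ≤ x := hx₃gt.le.trans hx
        have hlow : B * x ^ (c - (c-1)/2) ≤ h x := by
          rw [hsplit ((c-1)/2) x hxx₀]
          exact mul_le_mul_of_nonneg_right
            (hmonoW (mem_Ici.2 le_rfl) (mem_Ici.2 hx) hx)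
            (Real.rpow_pos_of_pos hx0 _).le
        have hxr : x ^ (c - (c-1)/2) / x = x ^ ((c-1)/2) := by
          rw [show c - (c-1)/2 = (c-1)/2 + 1 by ring, Real.rpow_add hx0, Real.rpow_one,
            mul_div_cancel_right₀ _ hx0.ne']
        calc B * x ^ ((c-1)/2) = B * (x ^ (c - (c-1)/2) / x) := by rw [hxr]
          _ = (B * x ^ (c - (c-1)/2)) / x := by ring
          _ ≤ h x / x := by gcongr
      · exact (tendsto_rpow_atTop (by linarith)).const_mul_atTop hB
  -- Step C : deriv h → ∞
  have hkey : ∀ x, x₀ + 1 ≤ x → h x / x - h x₀ ≤ deriv h x := by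
    intro x hx
    have hx0 : x₀ < x := lt_of_lt_of_le (lt_add_one x₀) hx
    obtain ⟨ξ, hξ, hslope⟩ := mvt_slope hd1 le_rfl hx0
    have h1 : deriv h ξ ≤ deriv h x := hdmono (mem_Ici.2 hξ.1.le) (mem_Ici.2 hx0.le) hξ.2.le
    have hnum : 0 ≤ h x - h x₀ :=
      sub_nonneg.2 (hmono.monotoneOn (mem_Ici.2 le_rfl) (mem_Ici.2 hx0.le) hx0.le)
    have hxpos : 0 < x := hx0pos.trans hx0
    have h2 : (h x - h x₀) / x ≤ (h x - h x₀) / (x - x₀) :=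
      div_le_div_of_nonneg_left hnum (sub_pos.2 hx0) (by linarith)
    have h3 : h x / x - h x₀ ≤ (h x - h x₀) / x := by
      rw [sub_div]
      have hh0 : 0 ≤ h x₀ := le_trans one_pos.le (hh1 x₀ le_rfl)
      have : h x₀ / x ≤ h x₀ := div_le_self hh0 (by linarith)
      linarith
    rw [hslope] at h1
    linarith
  have hT : Tendsto (deriv h) atTop atTop := by
    apply tendsto_atTop_mono' atTop (f₁ := fun x => h x / x - h x₀)
    · filter_upwards [eventually_ge_atTop (x₀ + 1)] with x hx using hkey x hx
    · have := tendsto_atTop_add_const_right atTop (-(h x₀)) hP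
      refine this.congr fun x => ?_
      ring
  -- Step D : φ facts
  have hφx₀ : ∀ y, h x₀ ≤ y → x₀ ≤ φ y := fun y hy => (hφ.2 y hy).1
  have hφh : ∀ y, h x₀ ≤ y → h (φ y) = y := fun y hy => (hφ.2 y hy).2
  have hφge : ∀ x y, x₀ ≤ x → h x₀ ≤ y → h x ≤ y → x ≤ φ y := by
    intro x y hx hy hxy
    by_contra hlt
    push_neg at hlt
    have := hmono (mem_Ici.2 (hφx₀ y hy)) (mem_Ici.2 hx) hlt
    rw [hφh y hy] at this
    linarith
  have hφle : ∀ x y, x₀ ≤ x → h x₀ ≤ y → y ≤ h x → φ y ≤ x := by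
    intro x y hx hy hxy
    by_contra hlt
    push_neg at hlt
    have := hmono (mem_Ici.2 hx) (mem_Ici.2 (hφx₀ y hy)) hlt
    rw [hφh y hy] at this
    linarith
  have hφmono : ∀ y y', h x₀ ≤ y → y ≤ y' → φ y ≤ φ y' := by
    intro y y' hy hyy
    refine hφle (φ y') y (hφx₀ y' (hy.trans hyy)) hy ?_
    rw [hφh y' (hy.trans hyy)]
    exact hyy
  have hφatTop : Tendsto φ atTop atTop := by
    rw [tendsto_atTop]
    intro b
    filter_upwards [eventually_ge_atTop (max (h (max b x₀)) (h x₀))] with y hy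
    have hy2 : h x₀ ≤ y := le_trans (le_max_right _ _) hy
    exact le_trans (le_max_left _ _)
      (hφge (max b x₀) y (le_max_right _ _) hy2 (le_trans (le_max_left _ _) hy))
  -- Step E : thresholds
  obtain ⟨x₁'', hx₁''⟩ := eventually_atTop.1 (hT.eventually_ge_atTop 1)
  set x₁ : ℝ := max x₁'' (x₀ + 1) with hx₁def
  have hx₁x₀ : x₀ + 1 ≤ x₁ := le_max_right _ _
  have hd1ge : ∀ x, x₁ ≤ x → 1 ≤ deriv h x := fun x hx =>
    hx₁'' x (le_trans (le_max_left _ _) hx)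
  have hstep : ∀ a, x₁ ≤ a → h a + 1 ≤ h (a + 1) := by
    intro a ha
    obtain ⟨ξ, hξ, hs⟩ := mvt_slope hd1 (show x₀ ≤ a by linarith) (lt_add_one a)
    have h1 : 1 ≤ deriv h ξ := hd1ge ξ (ha.trans hξ.1.le)
    rw [hs, show a + 1 - a = (1:ℝ) by ring, div_one] at h1
    linarith
  set M₁ : ℕ := ⌈x₁⌉₊ with hM₁def
  have hM₁x₁ : x₁ ≤ (M₁:ℝ) := Nat.le_ceil x₁
  have hM₁x₀ : x₀ ≤ (M₁:ℝ) := by linarith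
  have hM₁pos : 1 ≤ M₁ := by
    have : (0:ℝ) < (M₁:ℝ) := by linarith
    exact_mod_cast Nat.cast_pos.1 this
  have hfl1 : ∀ m : ℕ, M₁ ≤ m → 1 ≤ ⌊h (m:ℝ)⌋ := by
    intro m hm
    have hmx₀ : x₀ ≤ (m:ℝ) := le_trans hM₁x₀ (by exact_mod_cast hm)
    exact Int.le_floor.2 (by exact_mod_cast hh1 _ hmx₀)
  have hflstep : ∀ m : ℕ, M₁ ≤ m → ⌊h (m:ℝ)⌋ + 1 ≤ ⌊h ((m:ℝ)+1)⌋ := by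
    intro m hm
    have := hstep (m:ℝ) (le_trans hM₁x₁ (by exact_mod_cast hm))
    calc ⌊h (m:ℝ)⌋ + 1 = ⌊h (m:ℝ) + 1⌋ := (Int.floor_add_one _).symm
      _ ≤ ⌊h ((m:ℝ)+1)⌋ := Int.floor_le_floor this
  have hflmono : ∀ m m' : ℕ, M₁ ≤ m → m < m' → ⌊h (m:ℝ)⌋ < ⌊h (m':ℝ)⌋ := by
    intro m m' hm hmm
    have key : ∀ k : ℕ, ⌊h (m:ℝ)⌋ + k ≤ ⌊h ((m + k : ℕ):ℝ)⌋ := by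
      intro k
      induction k with
      | zero => simp
      | succ k ih =>
        have hmk : M₁ ≤ m + k := le_trans hm (Nat.le_add_right m k)
        have h2 := hflstep (m + k) hmk
        have hcast : ((m + (k+1) : ℕ):ℝ) = ((m + k : ℕ):ℝ) + 1 := by push_cast; ring
        rw [hcast]
        push_cast
        push_cast at ih h2
        linarith
    have h1 := key (m' - m)
    rw [Nat.add_sub_cancel' hmm.le] at h1
    have h2 : (1:ℤ) ≤ ((m' - m : ℕ):ℤ) := by
      have : 1 ≤ m' - m := by omega
      exact_mod_cast this
    linarith
  set f : ℕ → ℕ := fun m => (⌊h (m:ℝ)⌋).toNat with hfdef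
  have hfmono : ∀ m m' : ℕ, M₁ ≤ m → m < m' → f m < f m' := by
    intro m m' hm hmm
    have hpos : (0:ℤ) < ⌊h (m':ℝ)⌋ := lt_of_lt_of_le one_pos (hfl1 m' (hm.trans hmm.le))
    exact (Int.toNat_lt_toNat hpos).2 (hflmono m m' hm hmm)
  classical
  -- the main counting estimate
  have hcount : ∀ N : ℕ, h x₀ ≤ (N:ℝ) → (M₁:ℝ) + 1 ≤ φ ((N:ℝ)+1) → x₁ ≤ φ (N:ℝ) →
      |((Nh h ∩ Set.Icc 1 N).ncard : ℝ) - φ (N:ℝ)| ≤ (M₁:ℝ) + 2 := by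
    intro N hN1 hN2 hN3
    have hNx₀' : h x₀ ≤ (N:ℝ)+1 := by linarith
    have hφN1x₀ : x₀ ≤ φ ((N:ℝ)+1) := hφx₀ _ hNx₀'
    have hφNx₀ : x₀ ≤ φ (N:ℝ) := hφx₀ _ hN1
    set Mc : ℕ := ⌈φ ((N:ℝ)+1)⌉₊ with hMcdef
    have hMcge : φ ((N:ℝ)+1) ≤ (Mc:ℝ) := Nat.le_ceil _
    have hMcle : (Mc:ℝ) < φ ((N:ℝ)+1) + 1 := Nat.ceil_lt_add_one (by linarith)
    have hM₁Mc : M₁ ≤ Mc := by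
      have : (M₁:ℝ) ≤ (Mc:ℝ) := by linarith
      exact_mod_cast this
    have hS : (Nh h ∩ Set.Icc 1 N).Finite := (Set.finite_Icc 1 N).subset inter_subset_right
    set FA : Finset ℕ := (Finset.Ico M₁ Mc).image f with hFAdef
    have hinj : Set.InjOn f ↑(Finset.Ico M₁ Mc) := by
      intro a ha b hb hab
      simp only [Finset.coe_Ico, Set.mem_Ico] at ha hb
      rcases lt_trichotomy a b with hlt | heq | hgt
      · exact absurd hab (ne_of_lt (hfmono a b ha.1 hlt))
      · exact heq
      · exact absurd hab.symm (ne_of_lt (hfmono b a hb.1 hgt))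
    have hcardFA : FA.card = Mc - M₁ := by
      rw [hFAdef, Finset.card_image_of_injOn hinj, Nat.card_Ico]
    have hFAsub : ↑FA ⊆ Nh h ∩ Set.Icc 1 N := by
      intro n hn
      simp only [hFAdef, Finset.coe_image, Finset.coe_Ico, Set.mem_image, Set.mem_Ico] at hn
      obtain ⟨m, ⟨hm1, hm2⟩, rfl⟩ := hn
      have hmx₀ : x₀ ≤ (m:ℝ) := le_trans hM₁x₀ (by exact_mod_cast hm1)
      have hfl := hfl1 m hm1
      have hfm1 : 1 ≤ f m := by
        have : (1:ℤ) ≤ ((f m) : ℤ) := by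
          rw [hfdef]
          simp only
          rw [Int.toNat_of_nonneg (by linarith)]
          exact hfl
        exact_mod_cast this
      have hhm : h (m:ℝ) < (N:ℝ) + 1 := by
        have hmlt : ((m:ℕ):ℝ) < φ ((N:ℝ)+1) := Nat.lt_ceil.1 hm2
        calc h (m:ℝ) < h (φ ((N:ℝ)+1)) := hmono (mem_Ici.2 hmx₀) (mem_Ici.2 hφN1x₀) hmlt
          _ = (N:ℝ)+1 := hφh _ hNx₀'
      have hflN : ⌊h (m:ℝ)⌋ ≤ (N:ℤ) := by
        have : ⌊h (m:ℝ)⌋ < (N:ℤ) + 1 := Int.floor_lt.2 (by push_cast; linarith)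
        omega
      have hfN : f m ≤ N := Int.toNat_le.2 hflN
      refine ⟨⟨?_, m, ?_, ?_⟩, hfm1, hfN⟩
      · exact lt_of_lt_of_le one_pos hfm1
      · exact lt_of_lt_of_le hM₁pos hm1
      · rw [hfdef]
        simp only
        rw [Int.toNat_of_nonneg (by linarith)]
    have hlower : (Mc - M₁ : ℕ) ≤ (Nh h ∩ Set.Icc 1 N).ncard := by
      calc (Mc - M₁ : ℕ) = FA.card := hcardFA.symm
        _ = (↑FA : Set ℕ).ncard := (Set.ncard_coe_finset FA).symm
        _ ≤ _ := Set.ncard_le_ncard hFAsub hS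
    set FB : Finset ℕ := (Finset.Ico 1 M₁).image f with hFBdef
    have hSsub : Nh h ∩ Set.Icc 1 N ⊆ ↑(FA ∪ FB) := by
      rintro n ⟨⟨hn0, m, hm0, hnm⟩, hn1, hnN⟩
      have hnf : n = f m := by
        have h0 : ((f m) : ℤ) = (n:ℤ) := by
          rw [hfdef]
          simp only
          rw [Int.toNat_of_nonneg (by rw [← hnm]; positivity)]
          exact hnm.symm
        exact_mod_cast h0.symm
      simp only [Finset.coe_union, Set.mem_union, hFAdef, hFBdef, Finset.coe_image,
        Finset.coe_Ico, Set.mem_image, Set.mem_Ico]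
      rcases lt_or_ge m M₁ with hmM | hmM
      · right; exact ⟨m, ⟨hm0, hmM⟩, hnf.symm⟩
      · left
        refine ⟨m, ⟨hmM, ?_⟩, hnf.symm⟩
        rw [Nat.lt_ceil]
        by_contra hge
        push_neg at hge
        have hmx₀ : x₀ ≤ (m:ℝ) := le_trans hφN1x₀ hge
        have hge2 : (N:ℝ) + 1 ≤ h (m:ℝ) := by
          calc (N:ℝ)+1 = h (φ ((N:ℝ)+1)) := (hφh _ hNx₀').symm
            _ ≤ h (m:ℝ) := hmono.monotoneOn (mem_Ici.2 hφN1x₀) (mem_Ici.2 hmx₀) hge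
        have hge3 : (N:ℤ) + 1 ≤ ⌊h (m:ℝ)⌋ := Int.le_floor.2 (by push_cast; linarith)
        rw [← hnm] at hge3
        omega
    have hupper' : (Nh h ∩ Set.Icc 1 N).ncard ≤ (Mc - M₁) + (M₁ - 1) := by
      calc (Nh h ∩ Set.Icc 1 N).ncard ≤ (↑(FA ∪ FB) : Set ℕ).ncard :=
            Set.ncard_le_ncard hSsub (FA ∪ FB).finite_toSet
        _ = (FA ∪ FB).card := Set.ncard_coe_finset _
        _ ≤ FA.card + FB.card := Finset.card_union_le _ _
        _ ≤ (Mc - M₁) + (M₁ - 1) := by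
            rw [hcardFA]
            exact add_le_add le_rfl (le_trans Finset.card_image_le (by rw [Nat.card_Ico]))
    have hφstep : φ ((N:ℝ)+1) ≤ φ (N:ℝ) + 1 := by
      have h1 : (N:ℝ) + 1 ≤ h (φ (N:ℝ) + 1) := by
        have := hstep (φ (N:ℝ)) hN3
        rw [hφh _ hN1] at this
        linarith
      exact hφle (φ (N:ℝ) + 1) ((N:ℝ)+1) (by linarith) hNx₀' h1
    have hφm' : φ (N:ℝ) ≤ φ ((N:ℝ)+1) := hφmono _ _ hN1 (by linarith)
    have hlowR : φ ((N:ℝ)+1) - (M₁:ℝ) ≤ ((Nh h ∩ Set.Icc 1 N).ncard : ℝ) := by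
      have hcast := (Nat.cast_le (α := ℝ)).2 hlower
      rw [Nat.cast_sub hM₁Mc] at hcast
      linarith
    have hupR : ((Nh h ∩ Set.Icc 1 N).ncard : ℝ) ≤ φ ((N:ℝ)+1) + 1 := by
      have hcast := (Nat.cast_le (α := ℝ)).2 hupper'
      rw [Nat.cast_add, Nat.cast_sub hM₁Mc, Nat.cast_sub hM₁pos, Nat.cast_one] at hcast
      linarith
    rw [abs_le]
    constructor <;> linarith
  -- Step F : growth of φ N * N ^ (-1/4)
  have hgrow : Tendsto (fun N : ℕ => φ (N:ℝ) * (N:ℝ) ^ (-(1/4):ℝ)) atTop atTop := by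
    apply tendsto_atTop_mono' atTop
      (f₁ := fun N : ℕ => ((N:ℝ) ^ ((1/4):ℝ)) / A ^ ((1/2):ℝ))
    · filter_upwards [tendsto_natCast_atTop_atTop.eventually_ge_atTop (max (h x₂) (h x₀)),
        eventually_ge_atTop 1] with N hN hN1
      have hNx₂ : h x₂ ≤ (N:ℝ) := le_trans (le_max_left _ _) hN
      have hNx₀ : h x₀ ≤ (N:ℝ) := le_trans (le_max_right _ _) hN
      have hφNx₂ : x₂ ≤ φ (N:ℝ) := hφge x₂ _ hx₂gt.le hNx₀ hNx₂
      have hφpos : 0 < φ (N:ℝ) := hx₂pos.trans_le hφNx₂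
      have hNpos : (0:ℝ) < (N:ℝ) := by exact_mod_cast hN1
      have hub : (N:ℝ) ≤ A * φ (N:ℝ) ^ (2:ℝ) := by
        have hh := hupper (φ (N:ℝ)) hφNx₂
        rwa [hφh _ hNx₀] at hh
      have h1 : ((N:ℝ)/A) ^ ((1/2):ℝ) ≤ φ (N:ℝ) := by
        have h2 : ((N:ℝ)/A) ≤ φ (N:ℝ) ^ (2:ℝ) := by
          rw [div_le_iff₀ hApos]
          linarith
        calc ((N:ℝ)/A) ^ ((1/2):ℝ) ≤ (φ (N:ℝ) ^ (2:ℝ)) ^ ((1/2):ℝ) :=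
              Real.rpow_le_rpow (div_nonneg hNpos.le hApos.le) h2 (by norm_num)
          _ = φ (N:ℝ) := by
              rw [← Real.rpow_mul hφpos.le]
              norm_num
      have h3 : ((N:ℝ)/A) ^ ((1/2):ℝ) * (N:ℝ) ^ (-(1/4):ℝ) ≤
          φ (N:ℝ) * (N:ℝ) ^ (-(1/4):ℝ) :=
        mul_le_mul_of_nonneg_right h1 (Real.rpow_nonneg hNpos.le _)
      refine le_trans (le_of_eq ?_) h3
      rw [Real.div_rpow hNpos.le hApos.le, div_mul_eq_mul_div, ← Real.rpow_add hNpos]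
      norm_num
    · exact ((tendsto_rpow_atTop (by norm_num)).comp tendsto_natCast_atTop_atTop).atTop_div_const
        (Real.rpow_pos_of_pos hApos _)
  -- events
  have e1 : ∀ᶠ N : ℕ in atTop, h x₀ ≤ (N:ℝ) :=
    tendsto_natCast_atTop_atTop.eventually_ge_atTop _
  have e2 : ∀ᶠ N : ℕ in atTop, (M₁:ℝ) + 1 ≤ φ ((N:ℝ)+1) :=
    (hφatTop.comp (tendsto_atTop_add_const_right atTop 1
      tendsto_natCast_atTop_atTop)).eventually_ge_atTop _
  have e3 : ∀ᶠ N : ℕ in atTop, x₁ ≤ φ (N:ℝ) :=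
    (hφatTop.comp tendsto_natCast_atTop_atTop).eventually_ge_atTop _
  have e4 : ∀ᶠ N : ℕ in atTop, 1 ≤ φ (N:ℝ) * (N:ℝ) ^ (-(1/4):ℝ) :=
    hgrow.eventually_ge_atTop 1
  have hCpos : (0:ℝ) < (M₁:ℝ) + 2 := by positivity
  constructor
  · refine ⟨1/4, (M₁:ℝ) + 2, by norm_num, hCpos, ?_⟩
    obtain ⟨N₀, hN₀⟩ := eventually_atTop.1 ((e1.and (e2.and (e3.and e4))))
    refine ⟨N₀, fun N hN => ?_⟩
    obtain ⟨h1, h2, h3, h4⟩ := hN₀ N hN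
    calc |((Nh h ∩ Set.Icc 1 N).ncard : ℝ) - φ (N:ℝ)| ≤ (M₁:ℝ) + 2 := hcount N h1 h2 h3
      _ = ((M₁:ℝ) + 2) * 1 := (mul_one _).symm
      _ ≤ ((M₁:ℝ) + 2) * (φ (N:ℝ) * (N:ℝ) ^ (-(1/4):ℝ)) :=
          mul_le_mul_of_nonneg_left h4 hCpos.le
      _ = ((M₁:ℝ) + 2) * φ (N:ℝ) * (N:ℝ) ^ (-(1/4):ℝ) := (mul_assoc _ _ _).symm
  · have hratio : ∀ᶠ N : ℕ in atTop,
        |((Nh h ∩ Set.Icc 1 N).ncard : ℝ) / φ (N:ℝ) - 1| ≤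
          ((M₁:ℝ) + 2) * (N:ℝ) ^ (-(1/4):ℝ) := by
      filter_upwards [e1, e2, e3, e4] with N h1 h2 h3 h4
      have hφpos : 0 < φ (N:ℝ) := hx0pos.trans_le (hφx₀ _ h1)
      have hc := hcount N h1 h2 h3
      have heq : ((Nh h ∩ Set.Icc 1 N).ncard : ℝ) / φ (N:ℝ) - 1 =
          (((Nh h ∩ Set.Icc 1 N).ncard : ℝ) - φ (N:ℝ)) / φ (N:ℝ) := by
        field_simp
      rw [heq, abs_div, abs_of_pos hφpos, div_le_iff₀ hφpos]
      have h5 : ((M₁:ℝ) + 2) * 1 ≤ ((M₁:ℝ) + 2) * (φ (N:ℝ) * (N:ℝ) ^ (-(1/4):ℝ)) :=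
        mul_le_mul_of_nonneg_left h4 hCpos.le
      calc |((Nh h ∩ Set.Icc 1 N).ncard : ℝ) - φ (N:ℝ)| ≤ (M₁:ℝ) + 2 := hc
        _ ≤ ((M₁:ℝ) + 2) * (φ (N:ℝ) * (N:ℝ) ^ (-(1/4):ℝ)) := by linarith
        _ = ((M₁:ℝ) + 2) * (N:ℝ) ^ (-(1/4):ℝ) * φ (N:ℝ) := by ring
    have hzero : Tendsto (fun N : ℕ => ((M₁:ℝ) + 2) * (N:ℝ) ^ (-(1/4):ℝ)) atTop (𝓝 0) := by
      have h0 := (tendsto_rpow_neg_atTop (show (0:ℝ) < 1/4 by norm_num)).comp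
        tendsto_natCast_atTop_atTop
      have h1 := h0.const_mul ((M₁:ℝ) + 2)
      simpa using h1
    have h0 : Tendsto (fun N : ℕ => ((Nh h ∩ Set.Icc 1 N).ncard : ℝ) / φ (N:ℝ) - 1)
        atTop (𝓝 0) :=
      squeeze_zero_norm' (by simpa [Real.norm_eq_abs] using hratio) hzero
    have h1 := h0.add (tendsto_const_nhds (x := (1:ℝ)))
    simpa using h1


end
end

section
/- Let c ∈ (1, 30/29), h ∈ 𝓕_c, and let φ be the inverse of h. Define K_{h,N}(x) = φ(N)^{-1} ∑_{n ∈ 𝐍_h} δ_n(x) η(n/N) for x ∈ ℤ, and K̃_{h,N}(x) = K_{h,N}(−x). Then there is a constant C > 0 such that for all sufficiently large N and all x ∈ ℤ with 0 < |x| ≤ φ(N): |K_{h,N} * K̃_{h,N}(x)| ≤ C / N. -/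
open Filter MeasureTheory Set
open scoped Topology ENNReal NNReal

noncomputable section

/-- The kernel `K_{h,N}(x) = φ(N)⁻¹ ∑_{n ∈ 𝐍_h} δ_n(x) η(n/N)` on `ℤ`, normalized by
`φ(N)` instead of `|𝐍_h ∩ [1,N]|`. -/
def KB (h η φ : ℝ → ℝ) (N : ℕ) (y : ℤ) : ℝ :=
  (φ (N : ℝ))⁻¹ *
    Set.indicator {z : ℤ | ∃ n ∈ Nh h, (n : ℤ) = z} (fun z : ℤ => η ((z : ℝ) / N)) y

set_option maxHeartbeats 2000000 in
private lemma card_le_of_diam (s : Finset ℕ) (L : ℝ) (hL : 0 ≤ L)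
    (hs : ∀ a ∈ s, ∀ b ∈ s, (a:ℝ) ≤ (b:ℝ) → (b:ℝ) - a ≤ L) : (s.card : ℝ) ≤ L + 1 := by
  rcases s.eq_empty_or_nonempty with rfl | hne
  · simp
    linarith
  · have hmin := s.min'_mem hne
    have hmax := s.max'_mem hne
    have hminmax : s.min' hne ≤ s.max' hne := s.min'_le _ hmax
    have hdiff : ((s.max' hne : ℕ):ℝ) - ((s.min' hne : ℕ):ℝ) ≤ L :=
      hs _ hmin _ hmax (by exact_mod_cast hminmax)
    have hsub : s ⊆ Finset.Icc (s.min' hne) (s.max' hne) := fun a ha =>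
      Finset.mem_Icc.mpr ⟨s.min'_le a ha, s.le_max' a ha⟩
    have hcard := Finset.card_le_card hsub
    rw [Nat.card_Icc] at hcard
    have h1 : (s.card : ℝ) ≤ ((s.max' hne + 1 - s.min' hne : ℕ):ℝ) := by exact_mod_cast hcard
    have h2 : ((s.max' hne + 1 - s.min' hne : ℕ):ℝ) ≤ L + 1 := by
      rw [Nat.cast_sub (by omega)]
      push_cast
      linarith
    linarith

set_option maxHeartbeats 4000000 in
/-- Lemma 5.1 of the paper. For `c ∈ (1, 30/29)` and `0 < |x| ≤ φ(N)`,
`|K_{h,N} * K̃_{h,N}(x)| ≤ C / N` for all sufficiently large `N`. -/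
theorem kernel_autocorrelation_near_zero
    (c x₀ : ℝ) (h ϑ φ η : ℝ → ℝ)
    (hc : 1 < c) (hc' : c < 30 / 29)
    (hF : MemFc c x₀ h ϑ) (hφ : IsInverseOn h φ x₀) (hη : IsCutoff η) :
    ∃ C : ℝ, 0 < C ∧ ∃ N₀ : ℕ, ∀ N : ℕ, N₀ ≤ N → ∀ x : ℤ, x ≠ 0 →
      |(x : ℝ)| ≤ φ (N : ℝ) →
      |conv (KB h η φ N) (fun y : ℤ => KB h η φ N (-y)) x| ≤ C / N := by
  classical
  obtain ⟨hx01, hh1, hhC3, hh'pos, -, hϑC3, ⟨Ch, hCh, hform⟩, hϑ0, hϑ1, -, -⟩ := hF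
  obtain ⟨hφ1, hφ2⟩ := hφ
  obtain ⟨-, hηsupp, -, hηbd⟩ := hη
  have hx0pos : (0:ℝ) < x₀ := lt_of_lt_of_le one_pos hx01
  have hcont : ContinuousOn h (Set.Ici x₀) := hhC3.continuousOn
  have hmono : StrictMonoOn h (Set.Ici x₀) := by
    apply strictMonoOn_of_deriv_pos (convex_Ici x₀) hcont
    intro t ht
    rw [interior_Ici] at ht
    exact hh'pos t (le_of_lt ht)
  have hmle : ∀ a b : ℝ, x₀ ≤ a → a ≤ b → h a ≤ h b := fun a b ha hab =>
    hmono.monotoneOn ha (ha.trans hab) hab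
  have hϑcont : ContinuousOn ϑ (Set.Ici x₀) := hϑC3.continuousOn
  set I : ℝ → ℝ := fun t => ∫ u in x₀..t, ϑ u / u with hI_def
  have hgcont : ContinuousOn (fun u => ϑ u / u) (Set.Ici x₀) := by
    apply hϑcont.div continuousOn_id
    intro u hu
    exact ne_of_gt (lt_of_lt_of_le hx0pos hu)
  set D1 : ℝ → ℝ := fun t => h t * ((c + ϑ t) / t) with hD1_def
  set D2 : ℝ → ℝ := fun t => h t / t ^ 2 *
      ((c + ϑ t) * (c + ϑ t) - (c + ϑ t) + t * deriv ϑ t) with hD2_def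
  have hd1 : ∀ t, x₀ < t → HasDerivAt h (D1 t) t := by
    intro t ht
    have htpos : 0 < t := lt_trans hx0pos ht
    have hIinteg : IntervalIntegrable (fun u => ϑ u / u) volume x₀ t := by
      apply ContinuousOn.intervalIntegrable
      apply hgcont.mono
      rw [Set.uIcc_of_le (le_of_lt ht)]
      exact Set.Icc_subset_Ici_self
    have hmeas : StronglyMeasurableAtFilter (fun u => ϑ u / u) (nhds t) volume :=
      (hgcont.mono (Set.Ioi_subset_Ici_self)).stronglyMeasurableAtFilter isOpen_Ioi t ht
    have hcontat : ContinuousAt (fun u => ϑ u / u) t :=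
      hgcont.continuousAt (Ici_mem_nhds ht)
    have hI : HasDerivAt I (ϑ t / t) t :=
      intervalIntegral.integral_hasDerivAt_right hIinteg hmeas hcontat
    have hrp : HasDerivAt (fun s : ℝ => s ^ c) (c * t ^ (c - 1)) t :=
      Real.hasDerivAt_rpow_const (Or.inl (ne_of_gt htpos))
    have hexp : HasDerivAt (fun s => Real.exp (I s)) (Real.exp (I t) * (ϑ t / t)) t := hI.exp
    have hFd : HasDerivAt (fun s => Ch * s ^ c * Real.exp (I s))
        (Ch * (c * t ^ (c - 1)) * Real.exp (I t) + Ch * t ^ c * (Real.exp (I t) * (ϑ t / t))) t :=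
      (hrp.const_mul Ch).mul hexp
    have heq : h =ᶠ[nhds t] fun s => Ch * s ^ c * Real.exp (I s) := by
      filter_upwards [Ioi_mem_nhds ht] with s hs
      exact hform s (le_of_lt hs)
    have hgoal : HasDerivAt h
        (Ch * (c * t ^ (c - 1)) * Real.exp (I t) + Ch * t ^ c * (Real.exp (I t) * (ϑ t / t))) t :=
      hFd.congr_of_eventuallyEq heq
    have hval : Ch * (c * t ^ (c - 1)) * Real.exp (I t) + Ch * t ^ c * (Real.exp (I t) * (ϑ t / t))
        = D1 t := by
      rw [hD1_def]
      simp only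
      rw [hform t (le_of_lt ht), Real.rpow_sub_one (ne_of_gt htpos)]
      field_simp
      ring
    rw [hval] at hgoal
    exact hgoal
  -- second derivative of h (i.e. derivative of D1)
  have hd2 : ∀ t, x₀ < t → HasDerivAt D1 (D2 t) t := by
    intro t ht
    have htpos : 0 < t := lt_trans hx0pos ht
    have hϑdiff : DifferentiableAt ℝ ϑ t := by
      have : DifferentiableOn ℝ ϑ (Set.Ici x₀) := hϑC3.differentiableOn (by norm_num)
      exact this.differentiableAt (Ici_mem_nhds ht)
    have hu : HasDerivAt (fun s => (c + ϑ s) / s)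
        ((deriv ϑ t * t - (c + ϑ t) * 1) / t ^ 2) t := by
      have := ((hasDerivAt_const t c).add hϑdiff.hasDerivAt).div (hasDerivAt_id t)
        (by simpa using ne_of_gt htpos)
      simpa [Pi.add_def, Pi.div_def] using this
    have hmul : HasDerivAt (fun s => h s * ((c + ϑ s) / s))
        (D1 t * ((c + ϑ t) / t) + h t * ((deriv ϑ t * t - (c + ϑ t) * 1) / t ^ 2)) t :=
      (hd1 t ht).mul hu
    have hval : D1 t * ((c + ϑ t) / t) + h t * ((deriv ϑ t * t - (c + ϑ t) * 1) / t ^ 2)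
        = D2 t := by
      rw [hD1_def, hD2_def]
      field_simp
      ring
    rw [hval] at hmul
    exact hmul
  -- mean value theorem packaged for h and for D1
  have mvt1 : ∀ a b : ℝ, x₀ < a → a < b →
      ∃ ξ, a < ξ ∧ ξ < b ∧ h b - h a = (b - a) * D1 ξ := by
    intro a b ha hab
    have hIcc : Set.Icc a b ⊆ Set.Ioi x₀ := fun s hs => lt_of_lt_of_le ha hs.1
    obtain ⟨ξ, hξ, hval⟩ := exists_hasDerivAt_eq_slope h D1 hab
      (hcont.mono (fun s hs => Set.mem_Ici.mpr (le_of_lt (hIcc hs))))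
      (fun s hs => hd1 s (lt_of_lt_of_le ha (le_of_lt hs.1)))
    refine ⟨ξ, hξ.1, hξ.2, ?_⟩
    rw [hval, mul_comm, div_mul_cancel₀ _ (ne_of_gt (sub_pos.mpr hab))]
  have mvt2 : ∀ a b : ℝ, x₀ < a → a < b →
      ∃ ξ, a < ξ ∧ ξ < b ∧ D1 b - D1 a = (b - a) * D2 ξ := by
    intro a b ha hab
    have hIcc : Set.Icc a b ⊆ Set.Ioi x₀ := fun s hs => lt_of_lt_of_le ha hs.1
    obtain ⟨ξ, hξ, hval⟩ := exists_hasDerivAt_eq_slope D1 D2 hab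
      (fun s hs => ((hd2 s (hIcc hs)).continuousAt).continuousWithinAt)
      (fun s hs => hd2 s (lt_of_lt_of_le ha (le_of_lt hs.1)))
    refine ⟨ξ, hξ.1, hξ.2, ?_⟩
    rw [hval, mul_comm, div_mul_cancel₀ _ (ne_of_gt (sub_pos.mpr hab))]
  -- threshold T₁ beyond which ϑ and t·ϑ' are small
  have hcpos : (0:ℝ) < (c - 1) / 8 := by linarith
  have he1 : ∀ᶠ t in atTop, |ϑ t| < (c - 1) / 8 := by
    have := Metric.tendsto_nhds.mp hϑ0 _ hcpos
    simpa only [Real.dist_eq, sub_zero] using this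
  have he2 : ∀ᶠ t in atTop, |t * deriv ϑ t| < (c - 1) / 8 := by
    have := Metric.tendsto_nhds.mp hϑ1 _ hcpos
    simpa only [Real.dist_eq, sub_zero] using this
  obtain ⟨T₀, hT₀⟩ := eventually_atTop.mp (he1.and he2)
  set T₁ : ℝ := max T₀ (x₀ + 1) with hT₁_def
  have hT₁x₀ : x₀ < T₁ := lt_of_lt_of_le (by linarith) (le_max_right _ _)
  have hT₁1 : (1:ℝ) ≤ T₁ := by
    have := le_max_right T₀ (x₀ + 1)
    linarith
  have hϑsmall : ∀ t, T₁ ≤ t → |ϑ t| ≤ (c - 1) / 8 ∧ |t * deriv ϑ t| ≤ (c - 1) / 8 := by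
    intro t ht
    have := hT₀ t (le_trans (le_max_left _ _) ht)
    exact ⟨le_of_lt this.1, le_of_lt this.2⟩
  set p : ℝ := (c + 1) / 2 with hp_def
  have hp1 : 1 < p := by rw [hp_def]; linarith
  -- bounds for D1 and D2 for t ≥ T₁
  have hbound1 : ∀ t, T₁ ≤ t → p * (h t / t) ≤ D1 t ∧ D1 t ≤ 2 * (h t / t) := by
    intro t ht
    have htx₀ : x₀ < t := lt_of_lt_of_le hT₁x₀ ht
    have htpos : 0 < t := lt_trans hx0pos htx₀
    have hht : 1 ≤ h t := hh1 t (le_of_lt htx₀)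
    obtain ⟨hs1, -⟩ := hϑsmall t ht
    have habs := abs_le.mp hs1
    have hA1 : p ≤ c + ϑ t := by rw [hp_def]; linarith [habs.1]
    have hA2 : c + ϑ t ≤ 2 := by linarith [habs.2]
    have h1 : 0 ≤ h t / t := le_of_lt (div_pos (lt_of_lt_of_le one_pos hht) htpos)
    constructor
    · calc p * (h t / t) ≤ (c + ϑ t) * (h t / t) := mul_le_mul_of_nonneg_right hA1 h1
        _ = h t * ((c + ϑ t) / t) := by ring
    · calc h t * ((c + ϑ t) / t) = (c + ϑ t) * (h t / t) := by ring
        _ ≤ 2 * (h t / t) := mul_le_mul_of_nonneg_right hA2 h1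
  have hbound2 : ∀ t, T₁ ≤ t → (c - 1) / 2 * (h t / t ^ 2) ≤ D2 t := by
    intro t ht
    have htx₀ : x₀ < t := lt_of_lt_of_le hT₁x₀ ht
    have htpos : 0 < t := lt_trans hx0pos htx₀
    have hht : 1 ≤ h t := hh1 t (le_of_lt htx₀)
    obtain ⟨hs1, hs2⟩ := hϑsmall t ht
    have habs := abs_le.mp hs1
    have habs2 := abs_le.mp hs2
    have e1 : (c + ϑ t) - 1 ≤ (c + ϑ t) * (c + ϑ t) - (c + ϑ t) := by
      nlinarith [sq_nonneg (c + ϑ t - 1)]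
    have hexpr : (c - 1) / 2 ≤ (c + ϑ t) * (c + ϑ t) - (c + ϑ t) + t * deriv ϑ t := by
      linarith [habs.1, habs2.1]
    have hq : 0 ≤ h t / t ^ 2 := div_nonneg (by linarith) (by positivity)
    have h2 := mul_le_mul_of_nonneg_left hexpr hq
    rw [hD2_def]
    simp only
    nlinarith [h2]
  -- ratio t ↦ h t / t ^ p is monotone on [T₁, ∞)
  set r : ℝ → ℝ := fun t => h t / t ^ p with hr_def
  have hT₁pos : (0:ℝ) < T₁ := lt_trans hx0pos hT₁x₀
  have hder : ∀ t : ℝ, T₁ < t →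
      HasDerivAt r ((D1 t * t ^ p - h t * (p * t ^ (p - 1))) / (t ^ p) ^ 2) t := by
    intro t ht
    have htx₀ : x₀ < t := lt_trans hT₁x₀ ht
    have htpos : 0 < t := lt_trans hx0pos htx₀
    exact (hd1 t htx₀).div (Real.hasDerivAt_rpow_const (Or.inl (ne_of_gt htpos)))
      (ne_of_gt (Real.rpow_pos_of_pos htpos p))
  have hrmono : MonotoneOn r (Set.Ici T₁) := by
    apply monotoneOn_of_deriv_nonneg (convex_Ici T₁)
    · apply ContinuousOn.div (hcont.mono (fun s hs => le_of_lt (lt_of_lt_of_le hT₁x₀ hs)))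
      · exact continuousOn_id.rpow_const
          (fun s hs => Or.inl (ne_of_gt (lt_of_lt_of_le hT₁pos hs)))
      · intro s hs
        exact ne_of_gt (Real.rpow_pos_of_pos (lt_of_lt_of_le hT₁pos hs) p)
    · rw [interior_Ici]
      exact fun t ht => ((hder t ht).differentiableAt).differentiableWithinAt
    · rw [interior_Ici]
      intro t ht
      rw [(hder t ht).deriv]
      have ht1 : T₁ ≤ t := le_of_lt ht
      have htpos : 0 < t := lt_trans hT₁pos ht
      have hD1ge := (hbound1 t ht1).1
      have hrp : t ^ (p - 1) = t ^ p / t := Real.rpow_sub_one (ne_of_gt htpos) p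
      have htp : 0 < t ^ p := Real.rpow_pos_of_pos htpos p
      apply div_nonneg _ (by positivity)
      rw [sub_nonneg, hrp]
      calc h t * (p * (t ^ p / t)) = p * (h t / t) * t ^ p := by field_simp
        _ ≤ D1 t * t ^ p := mul_le_mul_of_nonneg_right hD1ge (le_of_lt htp)
  have hratio : ∀ a b : ℝ, T₁ ≤ a → a ≤ b → h a / a ^ p ≤ h b / b ^ p :=
    fun a b ha hab => hrmono (Set.mem_Ici.mpr ha) (Set.mem_Ici.mpr (le_trans ha hab)) hab
  have hdbl : ∀ s, T₁ ≤ s → 64 * h s ≤ h (64 * s) := by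
    intro s hs
    have hspos : 0 < s := lt_of_lt_of_le hT₁pos hs
    have hr2 := hratio s (64 * s) hs (by nlinarith)
    have hsp : (0:ℝ) < s ^ p := Real.rpow_pos_of_pos hspos p
    have h64p : ((64:ℝ) * s) ^ p = 64 ^ p * s ^ p := Real.mul_rpow (by norm_num) (le_of_lt hspos)
    rw [h64p, div_le_div_iff₀ hsp (by positivity)] at hr2
    have h64ge : (64:ℝ) ≤ 64 ^ p := by
      calc (64:ℝ) = 64 ^ (1:ℝ) := (Real.rpow_one 64).symm
        _ ≤ 64 ^ p := (Real.rpow_le_rpow_left_iff (by norm_num)).mpr (le_of_lt hp1)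
    have hhs : 0 ≤ h s := by linarith [hh1 s (le_of_lt (lt_of_lt_of_le hT₁x₀ hs))]
    have hkey : h s * s ^ p * 64 ≤ h s * s ^ p * (64 ^ p) :=
      mul_le_mul_of_nonneg_left h64ge (mul_nonneg hhs (le_of_lt hsp))
    have hmul : 64 * h s * s ^ p ≤ h (64 * s) * s ^ p := by linarith [hkey, hr2]
    exact le_of_mul_le_mul_right hmul hsp
  -- junk bound for small m
  set M₀ : ℕ := ⌈T₁⌉₊ with hM₀_def
  have hM₀pos : 0 < M₀ := Nat.ceil_pos.mpr hT₁pos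
  have hM₀ne : (Finset.Icc 1 M₀).Nonempty := ⟨1, Finset.mem_Icc.mpr ⟨le_refl 1, hM₀pos⟩⟩
  set B₀ : ℝ := (Finset.Icc 1 M₀).sup' hM₀ne (fun m => h (m:ℝ)) with hB₀_def
  have hjunk : ∀ m : ℕ, 1 ≤ m → m ≤ M₀ → h (m:ℝ) ≤ B₀ := by
    intro m h1 h2
    rw [hB₀_def]
    exact Finset.le_sup' (fun m : ℕ => h (m:ℝ)) (Finset.mem_Icc.mpr ⟨h1, h2⟩)
  -- constants
  set C₁ : ℝ := h T₁ / T₁ ^ p with hC₁_def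
  have hC₁pos : 0 < C₁ := div_pos (lt_of_lt_of_le one_pos (hh1 T₁ (le_of_lt hT₁x₀)))
    (Real.rpow_pos_of_pos hT₁pos p)
  set E : ℝ := (1 / C₁) ^ (1 / (p - 1)) with hE_def
  have hEpos : 0 < E := Real.rpow_pos_of_pos (by positivity) _
  set R : ℝ := max (64 * T₁) E with hR_def
  have hRT₁ : 64 * T₁ ≤ R := le_max_left _ _
  have hRx₀ : x₀ ≤ R := by nlinarith [le_max_left (64 * T₁) E]
  set N₀ : ℕ := ⌈max (h x₀) (max (2 * B₀ + 4) (h R))⌉₊ + 1 with hN₀_def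
  have main : ∀ N : ℕ, N₀ ≤ N → ∀ x : ℤ, x ≠ 0 → |(x:ℝ)| ≤ φ (N:ℝ) →
      |conv (KB h η φ N) (fun y : ℤ => KB h η φ N (-y)) x| ≤ (512 + 32212254720/(c-1)) / N := by
    intro N hN x hx0 hxabs
    have hN1 : 1 ≤ N := le_trans (by rw [hN₀_def]; omega) hN
    have hNpos : (0:ℝ) < N := by exact_mod_cast hN1
    have hNR : max (h x₀) (max (2 * B₀ + 4) (h R)) ≤ (N:ℝ) := by
      have h1 : (N₀ : ℝ) ≤ (N:ℝ) := by exact_mod_cast hN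
      rw [hN₀_def] at h1
      push_cast at h1
      linarith [Nat.le_ceil (max (h x₀) (max (2 * B₀ + 4) (h R)))]
    have hNx₀h : h x₀ ≤ (N:ℝ) := le_trans (le_max_left _ _) hNR
    have hNB : 2 * B₀ + 4 ≤ (N:ℝ) := le_trans (le_trans (le_max_left _ _) (le_max_right _ _)) hNR
    have hNhR : h R ≤ (N:ℝ) := le_trans (le_trans (le_max_right _ _) (le_max_right _ _)) hNR
    obtain ⟨hφx₀, hφval⟩ := hφ2 (N:ℝ) hNx₀h
    set φN : ℝ := φ (N:ℝ) with hφN_def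
    have hφR : R ≤ φN := by
      by_contra hlt
      push_neg at hlt
      have := hmono (Set.mem_Ici.mpr (le_refl x₀)) (Set.mem_Ici.mpr hRx₀)
      have h2 : h φN < h R := hmono (Set.mem_Ici.mpr hφx₀) (Set.mem_Ici.mpr hRx₀) hlt
      rw [hφval] at h2
      linarith
    have hφ64T₁ : 64 * T₁ ≤ φN := le_trans hRT₁ hφR
    have hφT₁ : T₁ ≤ φN := by linarith [hT₁pos]
    have hφpos : (0:ℝ) < φN := lt_of_lt_of_le hT₁pos hφT₁
    -- φN ≤ N
    have hφleN : φN ≤ (N:ℝ) := by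
      have hφp : (0:ℝ) < φN ^ p := Real.rpow_pos_of_pos hφpos p
      have hr3 := hratio T₁ φN le_rfl hφT₁
      rw [hφval] at hr3
      rw [← hC₁_def] at hr3
      have hNge : C₁ * φN ^ p ≤ (N:ℝ) := by
        have := (le_div_iff₀ hφp).mp hr3
        linarith [this]
      have hppos : (0:ℝ) < p - 1 := by linarith
      have hEp : E ^ (p - 1) = 1 / C₁ := by
        rw [hE_def, ← Real.rpow_mul (by positivity), one_div_mul_cancel (ne_of_gt hppos),
          Real.rpow_one]
      have hφp1 : 1 / C₁ ≤ φN ^ (p - 1) := by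
        rw [← hEp]
        exact Real.rpow_le_rpow (le_of_lt hEpos) (le_trans (le_max_right _ _) hφR)
          (le_of_lt hppos)
      have hsplit : φN ^ p = φN ^ (p - 1) * φN := by
        rw [← Real.rpow_add_one (ne_of_gt hφpos) (p - 1)]
        ring_nf
      have h1 : φN ≤ C₁ * φN ^ p := by
        rw [hsplit]
        calc φN = C₁ * (1 / C₁) * φN := by field_simp
          _ ≤ C₁ * φN ^ (p - 1) * φN := by
              apply mul_le_mul_of_nonneg_right _ (le_of_lt hφpos)
              exact mul_le_mul_of_nonneg_left hφp1 (le_of_lt hC₁pos)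
          _ = C₁ * (φN ^ (p - 1) * φN) := by ring
      linarith
    -- range of relevant t
    have hrange : ∀ t : ℝ, T₁ ≤ t → (N:ℝ)/4 ≤ h t → h t ≤ 5*N → φN/64 ≤ t ∧ t ≤ 64*φN := by
      intro t ht h4 h5
      have htx₀ : x₀ ≤ t := le_of_lt (lt_of_lt_of_le hT₁x₀ ht)
      constructor
      · by_contra hlt
        push_neg at hlt
        have h64T : T₁ ≤ φN / 64 := by linarith
        have h1 : h t ≤ h (φN / 64) := hmle t (φN / 64) htx₀ (le_of_lt hlt)
        have h2 : 64 * h (φN / 64) ≤ h (64 * (φN / 64)) := hdbl _ h64T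
        rw [show (64:ℝ) * (φN / 64) = φN by ring, hφval] at h2
        linarith
      · by_contra hlt
        push_neg at hlt
        have h2 : 64 * h φN ≤ h (64 * φN) := hdbl _ hφT₁
        rw [hφval] at h2
        have h1 : h (64 * φN) ≤ h t := hmle (64 * φN) t (by linarith) (le_of_lt hlt)
        linarith
    -- derivative bounds in the relevant range
    have hDb : ∀ t : ℝ, T₁ ≤ t → (N:ℝ)/4 ≤ h t → h t ≤ 5*N →
        (N:ℝ)/(256*φN) ≤ D1 t ∧ D1 t ≤ 640*N/φN ∧ (c-1)*N/(32768*φN^2) ≤ D2 t := by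
      intro t ht h4 h5
      obtain ⟨hlo, hhi⟩ := hrange t ht h4 h5
      have htpos : 0 < t := lt_of_lt_of_le hT₁pos ht
      have hht0 : 0 ≤ h t := by linarith [hh1 t (le_of_lt (lt_of_lt_of_le hT₁x₀ ht))]
      obtain ⟨hb1, hb2⟩ := hbound1 t ht
      have hb3 := hbound2 t ht
      have k1 : (N:ℝ)/4/(64*φN) ≤ h t / t := div_le_div₀ hht0 h4 htpos hhi
      refine ⟨?_, ?_, ?_⟩
      · have k1' : (N:ℝ)/(256*φN) ≤ h t / t := by
          rw [show (N:ℝ)/4/(64*φN) = N/(256*φN) by ring] at k1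
          exact k1
        have hp0 : 1 * (h t / t) ≤ p * (h t / t) :=
          mul_le_mul_of_nonneg_right (le_of_lt hp1) (div_nonneg hht0 (le_of_lt htpos))
        linarith
      · have k2 : h t / t ≤ 5*N/(φN/64) := div_le_div₀ (by positivity) h5 (by positivity) hlo
        rw [show (5:ℝ)*N/(φN/64) = 320*N/φN by ring] at k2
        calc D1 t ≤ 2 * (h t / t) := hb2
          _ ≤ 2 * (320*N/φN) := by linarith
          _ = 640*N/φN := by ring
      · have ht2 : t^2 ≤ (64*φN)^2 := by nlinarith
        have k3 : (N:ℝ)/4/((64*φN)^2) ≤ h t / t^2 :=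
          div_le_div₀ hht0 h4 (by positivity) ht2
        have k4 : (c-1)/2 * ((N:ℝ)/4/((64*φN)^2)) ≤ (c-1)/2 * (h t / t^2) :=
          mul_le_mul_of_nonneg_left k3 (by linarith)
        have : (c-1)*N/(32768*φN^2) = (c-1)/2 * ((N:ℝ)/4/((64*φN)^2)) := by ring
        linarith [hb3]
    -- kernel basics
    have hKBabs : ∀ z : ℤ, |KB h η φ N z| ≤ φN⁻¹ := by
      intro z
      rw [KB, abs_mul, abs_of_nonneg (inv_nonneg.mpr (le_of_lt hφpos))]
      have h2 : |Set.indicator {z : ℤ | ∃ n ∈ Nh h, (n : ℤ) = z}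
          (fun z : ℤ => η ((z : ℝ) / N)) z| ≤ 1 := by
        rw [Set.indicator_apply]
        split
        · exact abs_le.mpr ⟨by linarith [(hηbd ((z:ℝ)/N)).1], (hηbd ((z:ℝ)/N)).2⟩
        · simp
      calc φN⁻¹ * |Set.indicator {z : ℤ | ∃ n ∈ Nh h, (n : ℤ) = z}
            (fun z : ℤ => η ((z : ℝ) / N)) z| ≤ φN⁻¹ * 1 :=
            mul_le_mul_of_nonneg_left h2 (inv_nonneg.mpr (le_of_lt hφpos))
        _ = φN⁻¹ := mul_one _
    have hKBwin : ∀ z : ℤ, (¬ ((N:ℝ)/2 < (z:ℝ) ∧ (z:ℝ) < 4*N)) → KB h η φ N z = 0 := by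
      intro z hz
      have hη0 : η ((z:ℝ)/N) = 0 := by
        apply hηsupp
        intro hmem
        obtain ⟨hm1, hm2⟩ := hmem
        apply hz
        constructor
        · have := (lt_div_iff₀ hNpos).mp hm1
          linarith
        · have := (div_lt_iff₀ hNpos).mp hm2
          linarith
      rw [KB, Set.indicator_apply]
      split <;> simp [hη0]
    have hKBmem : ∀ z : ℤ, (¬ ∃ m : ℕ, 0 < m ∧ (⌊h (m:ℝ)⌋ : ℤ) = z) → KB h η φ N z = 0 := by
      intro z hz
      have hnm : z ∉ {z : ℤ | ∃ n ∈ Nh h, (n : ℤ) = z} := by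
        intro hmem
        obtain ⟨n, hnNh, hnz⟩ := hmem
        obtain ⟨hn0, m, hm0, hnm⟩ := hnNh
        exact hz ⟨m, hm0, by rw [← hnm, hnz]⟩
      rw [KB, Set.indicator_of_notMem hnm, mul_zero]
    set Pred : ℤ → ℤ → Prop := fun x' y =>
      ((N:ℝ)/2 < (y:ℝ) ∧ (y:ℝ) < 4*N) ∧
      ((N:ℝ)/2 < ((y - x' : ℤ):ℝ) ∧ ((y - x' : ℤ):ℝ) < 4*N) ∧
      (∃ m : ℕ, 0 < m ∧ (⌊h (m:ℝ)⌋ : ℤ) = y) ∧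
      (∃ m : ℕ, 0 < m ∧ (⌊h (m:ℝ)⌋ : ℤ) = y - x') with hPred_def
    have hpt : ∀ x' : ℤ, ∀ y : ℤ, |KB h η φ N y * KB h η φ N (y - x')| ≤
        φN⁻¹ * φN⁻¹ * (if Pred x' y then 1 else 0) := by
      intro x' y
      by_cases hp : Pred x' y
      · rw [if_pos hp, mul_one, abs_mul]
        exact mul_le_mul (hKBabs y) (hKBabs (y - x')) (abs_nonneg _)
          (inv_nonneg.mpr (le_of_lt hφpos))
      · rw [if_neg hp, mul_zero]
        have hz : KB h η φ N y * KB h η φ N (y - x') = 0 := by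
          by_contra hcon
          have hy := left_ne_zero_of_mul hcon
          have hyx := right_ne_zero_of_mul hcon
          apply hp
          simp only [hPred_def]
          refine ⟨?_, ?_, ?_, ?_⟩
          · by_contra hw; exact hy (hKBwin y hw)
          · by_contra hw; exact hyx (hKBwin (y - x') hw)
          · by_contra hw; exact hy (hKBmem y hw)
          · by_contra hw; exact hyx (hKBmem (y - x') hw)
        rw [hz, abs_zero]
    set FS : Finset ℤ := Finset.Icc 0 (5 * N) with hFS_def
    have hsupp : ∀ x' : ℤ, ∀ y : ℤ, y ∉ FS → KB h η φ N y * KB h η φ N (y - x') = 0 := by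
      intro x' y hy
      have hwin : ¬ ((N:ℝ)/2 < (y:ℝ) ∧ (y:ℝ) < 4*N) := by
        rintro ⟨h1, h2⟩
        apply hy
        rw [hFS_def, Finset.mem_Icc]
        constructor
        · have hyp : (0:ℝ) < (y:ℝ) := lt_of_le_of_lt (by positivity) h1
          exact_mod_cast le_of_lt hyp
        · have hyp : (y:ℝ) ≤ ((5*N : ℤ):ℝ) := by push_cast; linarith
          exact_mod_cast hyp
      rw [hKBwin y hwin, zero_mul]
    have hconv : ∀ x' : ℤ, conv (KB h η φ N) (fun y : ℤ => KB h η φ N (-y)) x' =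
        ∑ y ∈ FS, KB h η φ N y * KB h η φ N (y - x') := by
      intro x'
      unfold conv
      calc (∑' (y : ℤ), KB h η φ N y * KB h η φ N (-(x' - y)))
          = ∑' (y : ℤ), KB h η φ N y * KB h η φ N (y - x') :=
            tsum_congr (fun y => by rw [neg_sub])
        _ = ∑ y ∈ FS, KB h η φ N y * KB h η φ N (y - x') :=
            tsum_eq_sum (fun y hy => hsupp x' y hy)
    have hcard : ∀ x' : ℤ,
        |conv (KB h η φ N) (fun y : ℤ => KB h η φ N (-y)) x'| ≤
        φN⁻¹ * φN⁻¹ * ((FS.filter (Pred x')).card : ℝ) := by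
      intro x'
      rw [hconv x']
      calc |∑ y ∈ FS, KB h η φ N y * KB h η φ N (y - x')|
          ≤ ∑ y ∈ FS, |KB h η φ N y * KB h η φ N (y - x')| := Finset.abs_sum_le_sum_abs _ _
        _ ≤ ∑ y ∈ FS, φN⁻¹ * φN⁻¹ * (if Pred x' y then 1 else 0) :=
            Finset.sum_le_sum (fun y _ => hpt x' y)
        _ = φN⁻¹ * φN⁻¹ * ∑ y ∈ FS, (if Pred x' y then 1 else 0) := by
            rw [Finset.mul_sum]
        _ = φN⁻¹ * φN⁻¹ * ((FS.filter (Pred x')).card : ℝ) := by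
            rw [Finset.sum_boole]
    -- the key counting estimate
    have key : ∀ x' : ℤ, 1 ≤ x' → (x':ℝ) ≤ φN →
        (((FS.filter (Pred x')).card : ℕ) : ℝ) ≤
          (512 + 32212254720/(c-1)) * (φN^2 / N) := by
      intro x' hx1 hxφ
      have hc1 : (0:ℝ) < c - 1 := by linarith
      have hN1' : (1:ℝ) ≤ (N:ℝ) := by exact_mod_cast hN1
      set X : ℝ := (x' : ℝ) with hX_def
      have hX1 : (1:ℝ) ≤ X := by rw [hX_def]; exact_mod_cast hx1
      set mch : ℤ → ℕ := fun z =>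
        if hz : ∃ m : ℕ, 0 < m ∧ (⌊h (m:ℝ)⌋ : ℤ) = z then hz.choose else 0 with hmch_def
      have mspec : ∀ z : ℤ, (∃ m : ℕ, 0 < m ∧ (⌊h (m:ℝ)⌋ : ℤ) = z) →
          0 < mch z ∧ (⌊h (mch z : ℝ)⌋ : ℤ) = z := by
        intro z hz
        simp only [hmch_def, dif_pos hz]
        exact hz.choose_spec
      have goodm : ∀ z : ℤ, (N:ℝ)/2 < (z:ℝ) → (z:ℝ) < 4*N → ∀ m : ℕ, 0 < m →
          (⌊h (m:ℝ)⌋ : ℤ) = z →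
          T₁ ≤ (m:ℝ) ∧ (N:ℝ)/4 ≤ h m ∧ h m ≤ 5*N ∧ 1 ≤ m ∧ m ≤ ⌊64*φN⌋₊ := by
        intro z hz1 hz2 m hm0 hmz
        have hfl := Int.floor_eq_iff.mp hmz
        have hge : (z:ℝ) ≤ h (m:ℝ) := hfl.1
        have hlt : h (m:ℝ) < (z:ℝ) + 1 := hfl.2
        have h4 : (N:ℝ)/4 ≤ h m := by linarith
        have h5 : h (m:ℝ) ≤ 5*N := by linarith
        have hT : T₁ ≤ (m:ℝ) := by
          by_contra hc2
          push_neg at hc2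
          have hmM₀ : m ≤ M₀ := by
            have hcst : (m:ℝ) ≤ (M₀:ℝ) := le_trans (le_of_lt hc2) (Nat.le_ceil T₁)
            exact_mod_cast hcst
          have := hjunk m hm0 hmM₀
          linarith
        have hm64 : m ≤ ⌊64*φN⌋₊ := Nat.le_floor (hrange (m:ℝ) hT h4 h5).2
        exact ⟨hT, h4, h5, hm0, hm64⟩
      set M₂ : ℕ := ⌊64*φN⌋₊ with hM₂_def
      set Q : ℕ × ℕ → Prop := fun pr =>
        T₁ ≤ (pr.1:ℝ) ∧ T₁ ≤ (pr.2:ℝ) ∧ (N:ℝ)/4 ≤ h pr.1 ∧ h pr.1 ≤ 5*N ∧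
        (N:ℝ)/4 ≤ h pr.2 ∧ h pr.2 ≤ 5*N ∧ (⌊h (pr.1:ℝ)⌋ - ⌊h (pr.2:ℝ)⌋ : ℤ) = x' with hQ_def
      set PF : Finset (ℕ × ℕ) := ((Finset.Icc 1 M₂) ×ˢ (Finset.Icc 1 M₂)).filter Q with hPF_def
      have hDP : (FS.filter (Pred x')).card ≤ PF.card := by
        apply Finset.card_le_card_of_injOn (fun y => (mch y, mch (y - x')))
        · intro y hy
          rw [Finset.mem_coe, Finset.mem_filter] at hy
          simp only [hPred_def] at hy
          obtain ⟨hyF, hw1, hw2, hm1, hm2⟩ := hy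
          obtain ⟨hmp1, hms1⟩ := mspec y hm1
          obtain ⟨hmp2, hms2⟩ := mspec (y - x') hm2
          obtain ⟨g1T, g14, g15, g1a, g1b⟩ := goodm y hw1.1 hw1.2 _ hmp1 hms1
          obtain ⟨g2T, g24, g25, g2a, g2b⟩ := goodm (y - x') hw2.1 hw2.2 _ hmp2 hms2
          rw [Finset.mem_coe, hPF_def, Finset.mem_filter, Finset.mem_product]
          refine ⟨⟨Finset.mem_Icc.mpr ⟨g1a, g1b⟩, Finset.mem_Icc.mpr ⟨g2a, g2b⟩⟩, ?_⟩
          simp only [hQ_def]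
          refine ⟨g1T, g2T, g14, g15, g24, g25, ?_⟩
          rw [hms1, hms2]
          ring
        · intro y1 hy1 y2 hy2 heq
          rw [Finset.mem_coe, Finset.mem_filter] at hy1 hy2
          simp only [hPred_def] at hy1 hy2
          obtain ⟨-, -, -, hm1, -⟩ := hy1
          obtain ⟨-, -, -, hm2, -⟩ := hy2
          have h1 := (mspec y1 hm1).2
          have h2 := (mspec y2 hm2).2
          have hfsteq : mch y1 = mch y2 := congrArg Prod.fst heq
          rw [← h1, ← h2, hfsteq]
      have hQfacts : ∀ pr : ℕ × ℕ, pr ∈ PF →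
          T₁ ≤ (pr.1:ℝ) ∧ T₁ ≤ (pr.2:ℝ) ∧ (N:ℝ)/4 ≤ h pr.1 ∧ h pr.1 ≤ 5*N ∧
          (N:ℝ)/4 ≤ h pr.2 ∧ h pr.2 ≤ 5*N ∧ (⌊h (pr.1:ℝ)⌋ - ⌊h (pr.2:ℝ)⌋ : ℤ) = x' := by
        intro pr hpr
        have hq := (Finset.mem_filter.mp hpr).2
        simp only [hQ_def] at hq
        exact hq
      have hgap : ∀ pr : ℕ × ℕ, pr ∈ PF →
          pr.2 < pr.1 ∧ X - 1 < h (pr.1:ℝ) - h (pr.2:ℝ) ∧ h (pr.1:ℝ) - h (pr.2:ℝ) < X + 1 := by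
        intro pr hpr
        obtain ⟨h1T, h2T, h14, h15, h24, h25, hfl⟩ := hQfacts pr hpr
        have hf1 : ((⌊h (pr.1:ℝ)⌋ : ℤ):ℝ) ≤ h (pr.1:ℝ) := Int.floor_le _
        have hf1' : h (pr.1:ℝ) < (⌊h (pr.1:ℝ)⌋ : ℤ) + 1 := Int.lt_floor_add_one _
        have hf2 : ((⌊h (pr.2:ℝ)⌋ : ℤ):ℝ) ≤ h (pr.2:ℝ) := Int.floor_le _
        have hf2' : h (pr.2:ℝ) < (⌊h (pr.2:ℝ)⌋ : ℤ) + 1 := Int.lt_floor_add_one _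
        have hXeq : ((⌊h (pr.1:ℝ)⌋ : ℤ):ℝ) - ((⌊h (pr.2:ℝ)⌋ : ℤ):ℝ) = X := by
          rw [hX_def]
          exact_mod_cast congrArg (fun z : ℤ => (z:ℝ)) hfl
        have hg1 : X - 1 < h (pr.1:ℝ) - h (pr.2:ℝ) := by linarith
        have hg2 : h (pr.1:ℝ) - h (pr.2:ℝ) < X + 1 := by linarith
        refine ⟨?_, hg1, hg2⟩
        by_contra hcon
        push_neg at hcon
        have : h (pr.1:ℝ) ≤ h (pr.2:ℝ) := hmle _ _
          (le_of_lt (lt_of_lt_of_le hT₁x₀ h1T)) (by exact_mod_cast hcon)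
        linarith
      have hkb : ∀ pr : ℕ × ℕ, pr ∈ PF →
          ((pr.1 - pr.2 : ℕ):ℝ) * ((N:ℝ)/(256*φN)) < X + 1 ∧
          X - 1 < ((pr.1 - pr.2 : ℕ):ℝ) * (640*N/φN) := by
        intro pr hpr
        obtain ⟨hlt, hg1, hg2⟩ := hgap pr hpr
        obtain ⟨h1T, h2T, h14, h15, h24, h25, -⟩ := hQfacts pr hpr
        have hcast : ((pr.1 - pr.2 : ℕ):ℝ) = (pr.1:ℝ) - (pr.2:ℝ) := by
          rw [Nat.cast_sub (le_of_lt hlt)]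
        have hx₀2 : x₀ ≤ (pr.2:ℝ) := le_of_lt (lt_of_lt_of_le hT₁x₀ h2T)
        obtain ⟨ξ, hξ1, hξ2, hξval⟩ := mvt1 (pr.2:ℝ) (pr.1:ℝ)
          (lt_of_lt_of_le hT₁x₀ h2T) (by exact_mod_cast hlt)
        have hξT : T₁ ≤ ξ := le_trans h2T (le_of_lt hξ1)
        have hξ4 : (N:ℝ)/4 ≤ h ξ := le_trans h24 (hmle _ _ hx₀2 (le_of_lt hξ1))
        have hξ5 : h ξ ≤ 5*N := le_trans
          (hmle _ _ (le_of_lt (lt_of_lt_of_le hT₁x₀ hξT)) (le_of_lt hξ2)) h15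
        obtain ⟨hd_lo, hd_hi, -⟩ := hDb ξ hξT hξ4 hξ5
        have hknn : (0:ℝ) ≤ ((pr.1 - pr.2 : ℕ):ℝ) := Nat.cast_nonneg _
        constructor
        · have hstep : ((pr.1 - pr.2 : ℕ):ℝ) * ((N:ℝ)/(256*φN)) ≤
              ((pr.1 - pr.2 : ℕ):ℝ) * D1 ξ := mul_le_mul_of_nonneg_left hd_lo hknn
          have heq2 : ((pr.1 - pr.2 : ℕ):ℝ) * D1 ξ = h (pr.1:ℝ) - h (pr.2:ℝ) := by
            rw [hcast, ← hξval]
          linarith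
        · have hstep : ((pr.1 - pr.2 : ℕ):ℝ) * D1 ξ ≤
              ((pr.1 - pr.2 : ℕ):ℝ) * (640*N/φN) := mul_le_mul_of_nonneg_left hd_hi hknn
          have heq2 : ((pr.1 - pr.2 : ℕ):ℝ) * D1 ξ = h (pr.1:ℝ) - h (pr.2:ℝ) := by
            rw [hcast, ← hξval]
          linarith
      set Kmax : ℕ := ⌊256*(X+1)*φN/N⌋₊ with hKmax_def
      have hfib : ∀ pr : ℕ × ℕ, pr ∈ PF → pr.1 - pr.2 ∈ Finset.Icc 1 Kmax := by
        intro pr hpr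
        obtain ⟨hlt, -, -⟩ := hgap pr hpr
        rw [Finset.mem_Icc]
        refine ⟨by omega, ?_⟩
        apply Nat.le_floor
        obtain ⟨hb1, -⟩ := hkb pr hpr
        have hpos1 : (0:ℝ) < (N:ℝ)/(256*φN) := by positivity
        have hk2 : ((pr.1 - pr.2 : ℕ):ℝ) < (X+1) / ((N:ℝ)/(256*φN)) := (lt_div_iff₀ hpos1).mpr hb1
        have heq3 : (X+1) / ((N:ℝ)/(256*φN)) = 256*(X+1)*φN/N := by
          field_simp
        linarith
      have hsum : PF.card = ∑ k ∈ Finset.Icc 1 Kmax,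
          (PF.filter (fun pr => pr.1 - pr.2 = k)).card :=
        Finset.card_eq_sum_card_fiberwise hfib
      -- per-fiber bound
      have hfbound : ∀ k : ℕ, 1 ≤ k →
          (((PF.filter (fun pr => pr.1 - pr.2 = k)).card : ℕ):ℝ) ≤
            65536*φN^2/((c-1)*(k:ℝ)*N) + 1 := by
        intro k hk1
        set Sk := PF.filter (fun pr => pr.1 - pr.2 = k) with hSk_def
        have hkpos : (0:ℝ) < (k:ℝ) := by exact_mod_cast hk1
        have hfst : ∀ pr ∈ Sk, pr.1 = k + pr.2 := by
          intro pr hpr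
          have h2 := (Finset.mem_filter.mp hpr).2
          have hlt := (hgap pr (Finset.mem_of_mem_filter pr hpr)).1
          omega
        have himg : (Sk.image Prod.snd).card = Sk.card := by
          apply Finset.card_image_of_injOn
          intro a ha b hb hab
          rw [Finset.mem_coe] at ha hb
          have ha1 := hfst a ha
          have hb1 := hfst b hb
          exact Prod.ext (by rw [ha1, hb1, hab]) hab
        have hdiam : ∀ a ∈ Sk.image Prod.snd, ∀ b ∈ Sk.image Prod.snd, (a:ℝ) ≤ (b:ℝ) →
            (b:ℝ) - a ≤ 65536*φN^2/((c-1)*(k:ℝ)*N) := by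
          intro a ha b hb hab
          rcases eq_or_lt_of_le hab with heq | hlt
          · rw [← heq]
            simp
            positivity
          · have hablt : a < b := by exact_mod_cast hlt
            obtain ⟨pa, hpa, hpa2⟩ := Finset.mem_image.mp ha
            obtain ⟨pb, hpb, hpb2⟩ := Finset.mem_image.mp hb
            have hpaPF := Finset.mem_of_mem_filter pa hpa
            have hpbPF := Finset.mem_of_mem_filter pb hpb
            have hpa1 : pa.1 = k + a := by rw [hfst pa hpa, hpa2]
            have hpb1 : pb.1 = k + b := by rw [hfst pb hpb, hpb2]
            obtain ⟨qa1, qa2, qa3, qa4, qa5, qa6, -⟩ := hQfacts pa hpaPF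
            obtain ⟨qb1, qb2, qb3, qb4, qb5, qb6, -⟩ := hQfacts pb hpbPF
            obtain ⟨-, ga1, ga2⟩ := hgap pa hpaPF
            obtain ⟨-, gb1, gb2⟩ := hgap pb hpbPF
            -- rewrite everything in terms of a, b, k real
            have hcasta : ((pa.1:ℕ):ℝ) = (a:ℝ) + (k:ℝ) := by rw [hpa1]; push_cast; ring
            have hcastb : ((pb.1:ℕ):ℝ) = (b:ℝ) + (k:ℝ) := by rw [hpb1]; push_cast; ring
            rw [hcasta] at ga1 ga2 qa3 qa4
            rw [hcastb] at gb1 gb2 qb3 qb4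
            rw [hpa2] at ga1 ga2 qa2 qa5 qa6
            rw [hpb2] at gb1 gb2 qb2 qb5 qb6
            have haT : T₁ ≤ (a:ℝ) := qa2
            have hax₀ : x₀ < (a:ℝ) := lt_of_lt_of_le hT₁x₀ haT
            have hab' : (a:ℝ) < (b:ℝ) := by exact_mod_cast hablt
            -- MVT for t ↦ h (t+k) - h t on [a,b]
            have hshift : ∀ t : ℝ, x₀ < t → HasDerivAt (fun s => h (s + (k:ℝ))) (D1 (t + k)) t := by
              intro t ht
              have hd := (hd1 (t + (k:ℝ)) (by linarith [hkpos])).comp t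
                ((hasDerivAt_id t).add_const (k:ℝ))
              simpa [Function.comp_def] using hd
            obtain ⟨ζ, hζmem, hζval⟩ := exists_hasDerivAt_eq_slope
              (fun t => h (t + (k:ℝ)) - h t) (fun t => D1 (t + (k:ℝ)) - D1 t) hab'
              (fun t ht => (((hshift t (lt_of_lt_of_le hax₀ ht.1)).sub
                (hd1 t (lt_of_lt_of_le hax₀ ht.1))).continuousAt).continuousWithinAt)
              (fun t ht => (hshift t (lt_trans hax₀ ht.1)).sub (hd1 t (lt_trans hax₀ ht.1)))
            obtain ⟨ξ, hξ1, hξ2, hξval⟩ := mvt2 ζ (ζ + (k:ℝ))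
              (lt_trans hax₀ hζmem.1) (by linarith)
            rw [add_sub_cancel_left] at hξval
            -- bounds for ξ
            have hξT : T₁ ≤ ξ := le_trans haT (le_of_lt (lt_trans hζmem.1 hξ1))
            have hξ4 : (N:ℝ)/4 ≤ h ξ := le_trans qa5 (hmle _ _ (le_of_lt hax₀)
              (le_of_lt (lt_trans hζmem.1 hξ1)))
            have hξ5 : h ξ ≤ 5*N := by
              have h1 : ξ ≤ (b:ℝ) + (k:ℝ) := by linarith [hζmem.2]
              have h2 : h ξ ≤ h ((b:ℝ) + (k:ℝ)) := hmle _ _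
                (le_of_lt (lt_of_lt_of_le hT₁x₀ hξT)) h1
              linarith [qb4]
            obtain ⟨-, -, hd2lo⟩ := hDb ξ hξT hξ4 hξ5
            -- Δ = (b-a) * (k * D2 ξ) < 2
            have hΔeq : (h ((b:ℝ) + k) - h b) - (h ((a:ℝ) + k) - h a) =
                ((b:ℝ) - a) * ((k:ℝ) * D2 ξ) := by
              rw [← hξval, hζval, mul_comm, div_mul_cancel₀ _ (ne_of_gt (sub_pos.mpr hab'))]
            have hΔlt : (h ((b:ℝ) + k) - h b) - (h ((a:ℝ) + k) - h a) < 2 := by linarith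
            have hba : (0:ℝ) ≤ (b:ℝ) - a := by linarith
            have hinner : (k:ℝ) * ((c-1)*N/(32768*φN^2)) ≤ (k:ℝ) * D2 ξ :=
              mul_le_mul_of_nonneg_left hd2lo (le_of_lt hkpos)
            have houter : ((b:ℝ) - a) * ((k:ℝ) * ((c-1)*N/(32768*φN^2))) ≤
                ((b:ℝ) - a) * ((k:ℝ) * D2 ξ) := mul_le_mul_of_nonneg_left hinner hba
            have hfin2 : ((b:ℝ) - a) * ((k:ℝ) * ((c-1)*N/(32768*φN^2))) < 2 := by linarith
            have hDpos : (0:ℝ) < (k:ℝ) * ((c-1)*N/(32768*φN^2)) := by positivity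
            have h3 : (b:ℝ) - a < 2 / ((k:ℝ) * ((c-1)*N/(32768*φN^2))) :=
              (lt_div_iff₀ hDpos).mpr hfin2
            have h4 : 2 / ((k:ℝ) * ((c-1)*N/(32768*φN^2))) = 65536*φN^2/((c-1)*(k:ℝ)*N) := by
              field_simp
              ring
            linarith
        have hcd := card_le_of_diam (Sk.image Prod.snd)
          (65536*φN^2/((c-1)*(k:ℝ)*N)) (by positivity) hdiam
        rw [himg] at hcd
        exact hcd
      -- sum over nonempty fibers
      set KS := (Finset.Icc 1 Kmax).filter
        (fun k => ((PF.filter (fun pr => pr.1 - pr.2 = k))).Nonempty) with hKS_def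
      have hsum2 : (PF.card:ℝ) = ∑ k ∈ KS, ((PF.filter (fun pr => pr.1 - pr.2 = k)).card : ℝ) := by
        have hcc : (PF.card:ℝ) = ∑ k ∈ Finset.Icc 1 Kmax,
            ((PF.filter (fun pr => pr.1 - pr.2 = k)).card : ℝ) := by
          rw [hsum]
          push_cast
          ring
        rw [hcc, hKS_def]
        refine (Finset.sum_filter_of_ne ?_).symm
        intro k hk hne
        exact Finset.card_pos.mp (Nat.pos_of_ne_zero (fun h0 => hne (by rw [h0]; norm_num)))
      have hKSk : ∀ k ∈ KS, (1:ℝ) ≤ (k:ℝ) ∧ X - 1 ≤ (k:ℝ) * (640*N/φN) := by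
        intro k hk
        rw [hKS_def, Finset.mem_filter, Finset.mem_Icc] at hk
        obtain ⟨⟨hk1, hk2⟩, pr, hpr⟩ := hk
        have hkb2 := (hkb pr (Finset.mem_of_mem_filter pr hpr)).2
        have hkk : pr.1 - pr.2 = k := (Finset.mem_filter.mp hpr).2
        rw [hkk] at hkb2
        exact ⟨by exact_mod_cast hk1, le_of_lt hkb2⟩
      have hKScard : (KS.card:ℝ) ≤ 256*(X+1)*φN/N := by
        have h2 : KS.card ≤ Kmax := by
          calc KS.card ≤ (Finset.Icc 1 Kmax).card :=
                Finset.card_le_card (Finset.filter_subset _ _)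
            _ = Kmax := by rw [Nat.card_Icc]; omega
        calc (KS.card:ℝ) ≤ (Kmax:ℝ) := by exact_mod_cast h2
          _ ≤ 256*(X+1)*φN/N := Nat.floor_le (by positivity)
      set kq : ℝ := max 1 ((X-1)*φN/(640*N)) with hkq_def
      have hkqpos : (0:ℝ) < kq := lt_of_lt_of_le one_pos (le_max_left _ _)
      have hinv : ∀ k ∈ KS, (1:ℝ)/(k:ℝ) ≤ 1/kq := by
        intro k hk
        obtain ⟨hk1, hk2⟩ := hKSk k hk
        apply one_div_le_one_div_of_le hkqpos
        rw [hkq_def]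
        apply max_le hk1
        rw [div_le_iff₀ (by positivity)]
        have h1 : (X-1)*φN ≤ ((k:ℝ) * (640*N/φN))*φN :=
          mul_le_mul_of_nonneg_right hk2 (le_of_lt hφpos)
        have h2 : ((k:ℝ) * (640*N/φN))*φN = (k:ℝ)*(640*N) := by
          field_simp
        linarith
      have hharm : ∑ k ∈ KS, (1:ℝ)/(k:ℝ) ≤ 491520 := by
        have h1 : ∑ k ∈ KS, (1:ℝ)/(k:ℝ) ≤ KS.card • ((1:ℝ)/kq) :=
          Finset.sum_le_card_nsmul _ _ _ hinv
        rw [nsmul_eq_mul] at h1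
        by_cases hcase : (X-1)*φN/(640*N) ≤ 1
        · have hkq1 : kq = 1 := by rw [hkq_def]; exact max_eq_left hcase
          rw [hkq1] at h1
          have hX2 : (X-1)*φN ≤ 640*N := by
            rw [div_le_one (by positivity)] at hcase
            exact hcase
          have h5 : 256*(X+1)*φN/N ≤ 256*642 := by
            rw [div_le_iff₀ hNpos]
            linarith only [hX2, hφleN, hφpos, hX1]
          have h6 : KS.card * ((1:ℝ)/1) = (KS.card:ℝ) := by norm_num
          rw [h6] at h1
          linarith only [h1, hKScard, h5]
        · push_neg at hcase
          have hkq2 : kq = (X-1)*φN/(640*N) := by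
            rw [hkq_def]
            exact max_eq_right (le_of_lt hcase)
          have hX2 : 2 ≤ X := by
            by_contra hc2
            push_neg at hc2
            have hxlt : x' < 2 := by rw [hX_def] at hc2; exact_mod_cast hc2
            have hxeq : x' = 1 := by omega
            rw [hX_def, hxeq] at hcase
            norm_num at hcase
          have h3 : (KS.card:ℝ) * ((1:ℝ)/kq) ≤ (256*(X+1)*φN/N) * ((1:ℝ)/kq) :=
            mul_le_mul_of_nonneg_right hKScard (by positivity)
          have hXpos : (0:ℝ) < X - 1 := by linarith
          have heq4 : (256*(X+1)*φN/N) * ((1:ℝ)/kq) = 256*640*((X+1)/(X-1)) := by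
            rw [hkq2]
            field_simp
          have h5 : (X+1)/(X-1) ≤ 3 := by
            rw [div_le_iff₀ hXpos]
            linarith only [hX2]
          rw [heq4] at h3
          have h7 : 256*640*((X+1)/(X-1)) ≤ 256*640*3 := by linarith only [h5]
          linarith only [h1, h3, h7]
      -- total bound
      have htot : (PF.card:ℝ) ≤ 512*(φN^2/N) + (65536*φN^2/((c-1)*N)) * 491520 := by
        rw [hsum2]
        have hstep : ∑ k ∈ KS, ((PF.filter (fun pr => pr.1 - pr.2 = k)).card : ℝ) ≤
            ∑ k ∈ KS, ((65536*φN^2/((c-1)*N)) * ((1:ℝ)/(k:ℝ)) + 1) := by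
          apply Finset.sum_le_sum
          intro k hk
          have hk1 : 1 ≤ k := by
            have hm := (Finset.mem_filter.mp hk).1
            rw [Finset.mem_Icc] at hm
            exact hm.1
          have hkpos : (0:ℝ) < (k:ℝ) := by exact_mod_cast hk1
          have hfb := hfbound k hk1
          have heq5 : 65536*φN^2/((c-1)*(k:ℝ)*N) = (65536*φN^2/((c-1)*N)) * ((1:ℝ)/(k:ℝ)) := by
            field_simp
          linarith
        have hsplit2 : ∑ k ∈ KS, ((65536*φN^2/((c-1)*N)) * ((1:ℝ)/(k:ℝ)) + 1) =
            (65536*φN^2/((c-1)*N)) * (∑ k ∈ KS, (1:ℝ)/(k:ℝ)) + (KS.card:ℝ) := by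
          rw [Finset.sum_add_distrib, ← Finset.mul_sum]
          simp [Finset.sum_const, nsmul_eq_mul]
        have hA : (0:ℝ) ≤ 65536*φN^2/((c-1)*N) := by positivity
        have hmulharm : (65536*φN^2/((c-1)*N)) * (∑ k ∈ KS, (1:ℝ)/(k:ℝ)) ≤
            (65536*φN^2/((c-1)*N)) * 491520 := mul_le_mul_of_nonneg_left hharm hA
        have hKc : (KS.card:ℝ) ≤ 512*(φN^2/N) := by
          have hX2φ : X + 1 ≤ 2*φN := by linarith
          calc (KS.card:ℝ) ≤ 256*(X+1)*φN/N := hKScard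
            _ ≤ 256*(2*φN)*φN/N := by
                have hmul0 : (X+1)*φN ≤ (2*φN)*φN :=
                  mul_le_mul_of_nonneg_right hX2φ (le_of_lt hφpos)
                have hmul : 256*(X+1)*φN ≤ 256*(2*φN)*φN := by linarith
                exact (div_le_div_iff_of_pos_right hNpos).mpr hmul
            _ = 512*(φN^2/N) := by ring
        linarith only [hstep, hsplit2, hmulharm, hKc]
      -- conclude
      have h1 : ((FS.filter (Pred x')).card:ℝ) ≤ (PF.card:ℝ) := by exact_mod_cast hDP
      have h2 : (65536*φN^2/((c-1)*N)) * 491520 = (32212254720/(c-1)) * (φN^2/N) := by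
        field_simp
        ring
      have h3 : 512*(φN^2/N) = 512 * (φN^2/N) := rfl
      calc (((FS.filter (Pred x')).card : ℕ) : ℝ) ≤ (PF.card:ℝ) := h1
        _ ≤ 512*(φN^2/N) + (65536*φN^2/((c-1)*N)) * 491520 := htot
        _ = (512 + 32212254720/(c-1)) * (φN^2 / N) := by rw [h2]; ring
    -- symmetry in the sign of x
    have hswap : ∀ x' : ℤ, (FS.filter (Pred x')).card = (FS.filter (Pred (-x'))).card := by
      intro x'
      apply Finset.card_bij (fun y _ => y - x')
      · intro y hy
        rw [Finset.mem_filter] at hy ⊢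
        simp only [hPred_def] at hy ⊢
        obtain ⟨hyF, hw1, hw2, hm1, hm2⟩ := hy
        refine ⟨?_, ?_, ?_, ?_, ?_⟩
        · rw [hFS_def, Finset.mem_Icc]
          constructor
          · have hyp : (0:ℝ) < ((y - x' : ℤ):ℝ) := lt_of_le_of_lt (by positivity) hw2.1
            exact_mod_cast le_of_lt hyp
          · have hyp : ((y - x' : ℤ):ℝ) ≤ ((5*N : ℤ):ℝ) := by push_cast at hw2 ⊢; linarith [hw2.2]
            exact_mod_cast hyp
        · exact hw2
        · rw [show y - x' - (-x') = y by ring]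
          exact hw1
        · exact hm2
        · rw [show y - x' - (-x') = y by ring]
          exact hm1
      · intro a ha b hb hab
        omega
      · intro z hz
        rw [Finset.mem_filter] at hz
        simp only [hPred_def] at hz
        obtain ⟨hzF, hw1, hw2, hm1, hm2⟩ := hz
        refine ⟨z + x', ?_, by ring⟩
        rw [Finset.mem_filter]
        simp only [hPred_def]
        rw [show z + x' - x' = z by ring]
        refine ⟨?_, ?_, ?_, ?_, ?_⟩
        · rw [hFS_def, Finset.mem_Icc]
          have hw2' := hw2
          rw [show z - (-x') = z + x' by ring] at hw2'
          constructor
          · have hyp : (0:ℝ) < ((z + x' : ℤ):ℝ) := lt_of_le_of_lt (by positivity) hw2'.1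
            exact_mod_cast le_of_lt hyp
          · have hyp : ((z + x' : ℤ):ℝ) ≤ ((5*N : ℤ):ℝ) := by push_cast at hw2' ⊢; linarith [hw2'.2]
            exact_mod_cast hyp
        · have hw2' := hw2
          rw [show z - (-x') = z + x' by ring] at hw2'
          exact hw2'
        · exact hw1
        · have hm2' := hm2
          rw [show z - (-x') = z + x' by ring] at hm2'
          exact hm2'
        · exact hm1
    -- conclude
    have habs2 : φN⁻¹ * φN⁻¹ * ((512 + 32212254720/(c-1)) * (φN^2 / N)) =
        (512 + 32212254720/(c-1)) / N := by
      field_simp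
    rcases lt_or_gt_of_ne hx0 with hneg | hpos
    · have hx'1 : (1:ℤ) ≤ -x := by omega
      have hx'φ : ((-x : ℤ):ℝ) ≤ φN := by
        rw [abs_of_neg (by exact_mod_cast hneg)] at hxabs
        push_cast
        push_cast at hxabs
        exact hxabs
      have hk := key (-x) hx'1 hx'φ
      have hc2 := hcard x
      rw [hswap x] at hc2
      have h1 : φN⁻¹ * φN⁻¹ * (((FS.filter (Pred (-x))).card : ℕ) : ℝ) ≤
          φN⁻¹ * φN⁻¹ * ((512 + 32212254720/(c-1)) * (φN^2 / N)) :=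
        mul_le_mul_of_nonneg_left hk (by positivity)
      rw [habs2] at h1
      linarith [hc2]
    · have hx'1 : (1:ℤ) ≤ x := by omega
      have hx'φ : ((x : ℤ):ℝ) ≤ φN := by
        rw [abs_of_pos (by exact_mod_cast hpos)] at hxabs
        exact_mod_cast hxabs
      have hk := key x hx'1 hx'φ
      have hc2 := hcard x
      have h1 : φN⁻¹ * φN⁻¹ * (((FS.filter (Pred x)).card : ℕ) : ℝ) ≤
          φN⁻¹ * φN⁻¹ * ((512 + 32212254720/(c-1)) * (φN^2 / N)) :=
        mul_le_mul_of_nonneg_left hk (by positivity)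
      rw [habs2] at h1
      linarith [hc2]
  have hCpos : (0:ℝ) < 512 + 32212254720/(c-1) := by
    have h1 : (0:ℝ) < c - 1 := by linarith
    positivity
  exact ⟨512 + 32212254720/(c-1), hCpos, N₀, main⟩


end
end
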